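/- arXiv:2202.06607 — 8 statements merged into one kernel-verified Lean document; each statement's English description precedes it below -/
import Mathlib

section
/- Let f:(0,∞)→ℝ be strictly convex, and let (x₀,y₀),(x₁,y₁) ∈ (0,∞)² with x₀/y₀ ≠ x₁/y₁. Then the function t ↦ F((1-t)x₀+tx₁, (1-t)y₀+ty₁), where F(x,y)=y·f(x/y), is strictly convex on [0,1]. -/
private lemma perspective_aux (f : ℝ → ℝ)
    (hf : StrictConvexOn ℝ (Set.Ioi (0:ℝ)) f)
    {Xp Yp Xq Yq a b : ℝ} (hXp : 0 < Xp) (hYp : 0 < Yp) (hXq : 0 < Xq) (hYq : 0 < Yq)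
    (ha : 0 < a) (hb : 0 < b) (hab : a + b = 1) (hrne : Xp / Yp ≠ Xq / Yq) :
    (a * Yp + b * Yq) * f ((a * Xp + b * Xq) / (a * Yp + b * Yq)) <
      a * (Yp * f (Xp / Yp)) + b * (Yq * f (Xq / Yq)) := by
  have hYc : 0 < a * Yp + b * Yq := by positivity
  have h1 : (a * Xp + b * Xq) / (a * Yp + b * Yq)
      = (a * Yp / (a * Yp + b * Yq)) * (Xp / Yp)
        + (b * Yq / (a * Yp + b * Yq)) * (Xq / Yq) := by
    field_simp
  have hw1 : 0 < a * Yp / (a * Yp + b * Yq) := by positivity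
  have hw2 : 0 < b * Yq / (a * Yp + b * Yq) := by positivity
  have hwsum : a * Yp / (a * Yp + b * Yq) + b * Yq / (a * Yp + b * Yq) = 1 := by
    field_simp
  have hkey := hf.2 (Set.mem_Ioi.mpr (div_pos hXp hYp)) (Set.mem_Ioi.mpr (div_pos hXq hYq))
    hrne hw1 hw2 hwsum
  simp only [smul_eq_mul] at hkey
  rw [h1]
  have h2 := mul_lt_mul_of_pos_left hkey hYc
  refine h2.trans_le (le_of_eq ?_)
  field_simp

/-- If `f : (0,∞) → ℝ` is strictly convex and `(x₀,y₀), (x₁,y₁) ∈ (0,∞)²` with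
`x₀/y₀ ≠ x₁/y₁`, then `t ↦ F((1-t)x₀+tx₁, (1-t)y₀+ty₁)`, where `F(x,y) = y·f(x/y)`,
is strictly convex on `[0,1]`. -/
theorem perspective_strictConvexOn_segment (f : ℝ → ℝ)
    (hf : StrictConvexOn ℝ (Set.Ioi (0:ℝ)) f)
    (x₀ x₁ y₀ y₁ : ℝ) (hx₀ : 0 < x₀) (hx₁ : 0 < x₁) (hy₀ : 0 < y₀) (hy₁ : 0 < y₁)
    (hne : x₀ / y₀ ≠ x₁ / y₁) :
    StrictConvexOn ℝ (Set.Icc (0:ℝ) 1)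
      (fun t : ℝ =>
        ((1 - t) * y₀ + t * y₁) *
          f (((1 - t) * x₀ + t * x₁) / ((1 - t) * y₀ + t * y₁))) := by
  have hP : ∀ u v : ℝ, 0 < u → 0 < v → ∀ t ∈ Set.Icc (0:ℝ) 1, 0 < (1 - t) * u + t * v := by
    intro u v hu hv t ht
    rcases eq_or_lt_of_le ht.1 with h0 | h0
    · simp [← h0, hu]
    · have h1 : (1 - t) * u ≥ 0 := mul_nonneg (by linarith [ht.2]) hu.le
      nlinarith [mul_pos h0 hv]
  refine ⟨convex_Icc 0 1, ?_⟩
  intro p hp q hq hpq a b ha hb hab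
  simp only [smul_eq_mul]
  have hXp := hP x₀ x₁ hx₀ hx₁ p hp
  have hYp := hP y₀ y₁ hy₀ hy₁ p hp
  have hXq := hP x₀ x₁ hx₀ hx₁ q hq
  have hYq := hP y₀ y₁ hy₀ hy₁ q hq
  have hXc : (1 - (a*p + b*q)) * x₀ + (a*p + b*q) * x₁
      = a * ((1 - p) * x₀ + p * x₁) + b * ((1 - q) * x₀ + q * x₁) := by
    linear_combination -x₀ * hab
  have hYc : (1 - (a*p + b*q)) * y₀ + (a*p + b*q) * y₁
      = a * ((1 - p) * y₀ + p * y₁) + b * ((1 - q) * y₀ + q * y₁) := by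
    linear_combination -y₀ * hab
  rw [hXc, hYc]
  have hrne : ((1 - p) * x₀ + p * x₁) / ((1 - p) * y₀ + p * y₁)
      ≠ ((1 - q) * x₀ + q * x₁) / ((1 - q) * y₀ + q * y₁) := by
    intro h
    rw [div_eq_div_iff hYp.ne' hYq.ne'] at h
    apply hne
    rw [div_eq_div_iff hy₀.ne' hy₁.ne']
    have hfac : (q - p) * (x₀ * y₁ - x₁ * y₀) = 0 := by linear_combination h
    have hqp : q - p ≠ 0 := sub_ne_zero.mpr (Ne.symm hpq)
    have := (mul_eq_zero.mp hfac).resolve_left hqp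
    linarith [sub_eq_zero.mp this]
  exact perspective_aux f hf hXp hYp hXq hYq ha hb hab hrne
end

section
/- Let G be a countable group, f strictly convex with f(1)=0, λ a generating probability measure on G, and X an ergodic quasi-invariant G-space. Then the entropy function h_{λ,f} is strictly convex on the set of measures ν (in the fixed measure class) with h_{λ,f}(ν) < ∞; in particular there is at most one measure in that class attaining the infimum I_{λ,f}(X). -/
open MeasureTheory

/-- The `f`-divergence `D_f(η‖m)`, valued in `[0,∞]`. -/
noncomputable def fDivE {X : Type*} [MeasurableSpace X] (f : ℝ → ℝ)
    (η m : Measure X) : ENNReal :=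
  ∫⁻ x, ENNReal.ofReal (f ((η.rnDeriv m x).toReal)) ∂m

/-- The Furstenberg `(λ,f)`-entropy `h_{λ,f}(ν) = Σ_g λ(g)·D_f(g⁻¹ν‖ν)`. -/
noncomputable def fEntropy {G X : Type*} [Group G] [MeasurableSpace X]
    [MulAction G X] (f : ℝ → ℝ) (lam : G → ℝ) (ν : Measure X) : ENNReal :=
  ∑' g : G, ENNReal.ofReal (lam g) * fDivE f (ν.map (fun x => g⁻¹ • x)) ν

/-!
Joint convexity of `D_f`: if `m = a m₀ + b m₁`, then the density of `a η₀ + b η₁` with respect to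
`m` is the convex combination of the densities `dηᵢ/dmᵢ` with weights `a dm₀/dm` and `b dm₁/dm`,
so strict convexity of `f` bounds each term `D_f(g⁻¹ν‖ν)` of the entropy of a mixture, strictly
wherever the Radon–Nikodym cocycles `d(g⁻¹νᵢ)/dνᵢ` of the two measures differ. If they agreed
for every `g` in the support of `λ`, then `dν₁/dν₀` would be invariant under a generating set,
hence under `G`, hence a.e. constant by ergodicity, hence `1` as both are probability measures.
Two minimisers of the entropy would thus have a midpoint of strictly smaller entropy.
-/

open scoped ENNReal

section RadonNikodym

variable {X : Type*} [MeasurableSpace X]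

lemma isProbabilityMeasure_smul_add {μ₀ μ₁ : Measure X}
    [IsProbabilityMeasure μ₀] [IsProbabilityMeasure μ₁] {a b : ℝ≥0∞} (hab : a + b = 1) :
    IsProbabilityMeasure (a • μ₀ + b • μ₁) :=
  ⟨by simp [hab]⟩

lemma eq_of_rnDeriv_ae_eq_const {μ ν : Measure X}
    [IsProbabilityMeasure μ] [IsProbabilityMeasure ν] (hνμ : ν ≪ μ) {c : ℝ≥0∞}
    (hc : ν.rnDeriv μ =ᵐ[μ] fun _ => c) : μ = ν := by
  have hν : ν = c • μ := by
    rw [← Measure.withDensity_rnDeriv_eq ν μ hνμ, withDensity_congr_ae hc, withDensity_const]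
  have hc1 : c = 1 := (by simpa using congrArg (· Set.univ) hν : 1 = c).symm
  rw [hν, hc1, one_smul]

lemma ae_rnDeriv_ne_zero_ne_top {μ ν : Measure X} [IsFiniteMeasure μ] [IsFiniteMeasure ν]
    (hμν : μ ≪ ν) (hνμ : ν ≪ μ) : ∀ᵐ x ∂ν, μ.rnDeriv ν x ≠ 0 ∧ μ.rnDeriv ν x ≠ ∞ := by
  filter_upwards [hνμ.ae_le (Measure.rnDeriv_pos hμν), Measure.rnDeriv_ne_top μ ν] with x h h'
  exact ⟨h.ne', h'⟩

lemma rnDeriv_smul_add_smul (μ₀ μ₁ m : Measure X) [IsFiniteMeasure μ₀] [IsFiniteMeasure μ₁]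
    [IsFiniteMeasure m] {a b : ℝ≥0∞} (ha : a ≠ ∞) (hb : b ≠ ∞) :
    (a • μ₀ + b • μ₁).rnDeriv m =ᵐ[m] fun x => a * μ₀.rnDeriv m x + b * μ₁.rnDeriv m x := by
  have := μ₀.smul_finite ha
  have := μ₁.smul_finite hb
  filter_upwards [Measure.rnDeriv_add' (a • μ₀) (b • μ₁) m,
    Measure.rnDeriv_smul_left_of_ne_top μ₀ m ha, Measure.rnDeriv_smul_left_of_ne_top μ₁ m hb]
    with x hadd h₀ h₁
  rw [hadd, Pi.add_apply, h₀, h₁, Pi.smul_apply, Pi.smul_apply, smul_eq_mul, smul_eq_mul]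

lemma lintegral_const_mul_rnDeriv_mul {μ m : Measure X} [IsFiniteMeasure μ] [IsFiniteMeasure m]
    (hμm : μ ≪ m) {a : ℝ≥0∞} (ha : a ≠ ∞) {F : X → ℝ≥0∞} (hF : AEMeasurable F m) :
    ∫⁻ x, a * μ.rnDeriv m x * F x ∂m = a * ∫⁻ x, F x ∂μ := by
  simp_rw [mul_assoc]
  rw [lintegral_const_mul' _ _ ha, lintegral_rnDeriv_mul hμm hF]

lemma rnDeriv_comp_ae_eq_of_rnDeriv_map_ae_eq {T : X → X}
    (hT : MeasurableEmbedding T) {μ₀ μ₁ : Measure X} [IsFiniteMeasure μ₀] [IsFiniteMeasure μ₁]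
    (h₁₀ : μ₁ ≪ μ₀) (hT₀ : μ₀.map T ≪ μ₀) (hT₀' : μ₀ ≪ μ₀.map T) (hT₁ : μ₁.map T ≪ μ₁)
    (heq : (μ₀.map T).rnDeriv μ₀ =ᵐ[μ₀] (μ₁.map T).rnDeriv μ₁) :
    (fun x => μ₁.rnDeriv μ₀ (T x)) =ᵐ[μ₀] μ₁.rnDeriv μ₀ := by
  -- expand `d(T_*μ₁)/dμ₀` by the chain rule through `T_*μ₀` and through `μ₁`, then cancel the
  -- common cocycle to get `d(T_*μ₁)/d(T_*μ₀) = dμ₁/dμ₀`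
  have hchain₀ := Measure.rnDeriv_mul_rnDeriv (h₁₀.map hT.measurable) (κ := μ₀)
  have hchain₁ := Measure.rnDeriv_mul_rnDeriv hT₁ (κ := μ₀)
  have hpos : ∀ᵐ x ∂μ₀, 0 < (μ₀.map T).rnDeriv μ₀ x := hT₀'.ae_le (Measure.rnDeriv_pos hT₀)
  have hA : (μ₁.map T).rnDeriv (μ₀.map T) =ᵐ[μ₀] μ₁.rnDeriv μ₀ := by
    filter_upwards [hchain₀, hchain₁, heq, hpos, Measure.rnDeriv_ne_top (μ₀.map T) μ₀]
      with x h₀ h₁ hx hpos hfin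
    simp only [Pi.mul_apply] at h₀ h₁
    rw [← ENNReal.mul_left_inj hpos.ne' hfin, h₀, ← h₁, hx, mul_comm]
  exact ((⟨hT.measurable, hT₀⟩ : Measure.QuasiMeasurePreserving T μ₀ μ₀).ae_eq hA).symm.trans
    (hT.rnDeriv_map μ₁ μ₀)

end RadonNikodym

section Divergence

variable {X : Type*} [MeasurableSpace X] {f : ℝ → ℝ}

lemma ContinuousOn.aemeasurable_ofReal_comp_toReal
    (hf : ContinuousOn f (Set.Ioi 0)) {μ : Measure X} {g : X → ℝ≥0∞} (hg : Measurable g)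
    (hpos : ∀ᵐ x ∂μ, g x ≠ 0 ∧ g x ≠ ∞) :
    AEMeasurable (fun x => ENNReal.ofReal (f (g x).toReal)) μ :=
  (ENNReal.measurable_ofReal.comp ((hf.comp_continuous Real.continuous_exp
    Real.exp_pos).measurable.comp (Real.measurable_log.comp hg.ennreal_toReal))).aemeasurable.congr
    (hpos.mono fun x hx => by simp [Real.exp_log (ENNReal.toReal_pos hx.1 hx.2)])

lemma ofReal_apply_toReal_add_lt (hf : StrictConvexOn ℝ (Set.Ioi 0) f)
    (hfpos : ∀ x ∈ Set.Ioi (0:ℝ), 0 ≤ f x) {p q r s : ℝ≥0∞} (hp : p ≠ 0) (hq : q ≠ 0)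
    (hpq : p + q = 1) (hr₀ : r ≠ 0) (hr : r ≠ ∞) (hs₀ : s ≠ 0) (hs : s ≠ ∞) (hrs : r ≠ s) :
    ENNReal.ofReal (f (p * r + q * s).toReal)
      < p * ENNReal.ofReal (f r.toReal) + q * ENNReal.ofReal (f s.toReal) := by
  have hp' : p ≠ ∞ := ne_top_of_le_ne_top ENNReal.one_ne_top (hpq ▸ le_self_add)
  have hq' : q ≠ ∞ := ne_top_of_le_ne_top ENNReal.one_ne_top (hpq ▸ le_add_self)
  have hpq' : p.toReal + q.toReal = 1 := by
    rw [← ENNReal.toReal_add hp' hq', hpq, ENNReal.toReal_one]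
  have hr' : 0 < r.toReal := ENNReal.toReal_pos hr₀ hr
  have hs' : 0 < s.toReal := ENNReal.toReal_pos hs₀ hs
  have hp'' : 0 < p.toReal := ENNReal.toReal_pos hp hp'
  have hq'' : 0 < q.toReal := ENNReal.toReal_pos hq hq'
  have harg : (p * r + q * s).toReal = p.toReal * r.toReal + q.toReal * s.toReal := by
    rw [ENNReal.toReal_add (ENNReal.mul_ne_top hp' hr) (ENNReal.mul_ne_top hq' hs),
      ENNReal.toReal_mul, ENNReal.toReal_mul]
  have hrhs : p * ENNReal.ofReal (f r.toReal) + q * ENNReal.ofReal (f s.toReal)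
      = ENNReal.ofReal (p.toReal * f r.toReal + q.toReal * f s.toReal) := by
    rw [ENNReal.ofReal_add (mul_nonneg hp''.le (hfpos _ hr')) (mul_nonneg hq''.le (hfpos _ hs')),
      ENNReal.ofReal_mul hp''.le, ENNReal.ofReal_mul hq''.le, ENNReal.ofReal_toReal hp',
      ENNReal.ofReal_toReal hq']
  have hlt := hf.2 hr' hs' ((ENNReal.toReal_eq_toReal_iff' hr hs).not.2 hrs) hp'' hq'' hpq'
  rw [smul_eq_mul, smul_eq_mul, smul_eq_mul, smul_eq_mul] at hlt
  rw [harg, hrhs]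
  exact (ENNReal.ofReal_lt_ofReal_iff_of_nonneg (hfpos _ (Set.mem_Ioi.2 (by positivity)))).2 hlt

lemma ofReal_apply_toReal_add_le (hf : StrictConvexOn ℝ (Set.Ioi 0) f)
    (hfpos : ∀ x ∈ Set.Ioi (0:ℝ), 0 ≤ f x) {p q r s : ℝ≥0∞} (hp : p ≠ 0) (hq : q ≠ 0)
    (hpq : p + q = 1) (hr₀ : r ≠ 0) (hr : r ≠ ∞) (hs₀ : s ≠ 0) (hs : s ≠ ∞) :
    ENNReal.ofReal (f (p * r + q * s).toReal)
      ≤ p * ENNReal.ofReal (f r.toReal) + q * ENNReal.ofReal (f s.toReal) := by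
  rcases eq_or_ne r s with rfl | hrs
  · rw [← add_mul, ← add_mul, hpq, one_mul, one_mul]
  · exact (ofReal_apply_toReal_add_lt hf hfpos hp hq hpq hr₀ hr hs₀ hs hrs).le

lemma exists_fDivE_smul_add_majorant (hf : StrictConvexOn ℝ (Set.Ioi 0) f)
    (hfpos : ∀ x ∈ Set.Ioi (0:ℝ), 0 ≤ f x) {η₀ η₁ m₀ m₁ : Measure X}
    [IsFiniteMeasure η₀] [IsFiniteMeasure η₁] [IsFiniteMeasure m₀] [IsFiniteMeasure m₁]
    (hη₀ : η₀ ≪ m₀) (hm₀ : m₀ ≪ η₀) (hη₁ : η₁ ≪ m₁) (hm₁ : m₁ ≪ η₁)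
    (h₀₁ : m₀ ≪ m₁) (h₁₀ : m₁ ≪ m₀) {a b : ℝ≥0∞} (ha₀ : a ≠ 0) (ha : a ≠ ∞)
    (hb₀ : b ≠ 0) (hb : b ≠ ∞) :
    ∃ R : X → ℝ≥0∞, AEMeasurable R (a • m₀ + b • m₁)
      ∧ ∫⁻ x, R x ∂(a • m₀ + b • m₁) = a * fDivE f η₀ m₀ + b * fDivE f η₁ m₁
      ∧ ∀ᵐ x ∂(a • m₀ + b • m₁),
        ENNReal.ofReal (f ((a • η₀ + b • η₁).rnDeriv (a • m₀ + b • m₁) x).toReal) ≤ R x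
        ∧ (η₀.rnDeriv m₀ x ≠ η₁.rnDeriv m₁ x →
          ENNReal.ofReal (f ((a • η₀ + b • η₁).rnDeriv (a • m₀ + b • m₁) x).toReal) < R x) := by
  set m := a • m₀ + b • m₁
  have := m₀.smul_finite ha
  have := m₁.smul_finite hb
  have hm₀m : m₀ ≪ m := (Measure.absolutelyContinuous_smul ha₀).add_right _
  have hm₁m : m₁ ≪ m := (Measure.absolutelyContinuous_smul hb₀).add_right' _
  have hmm₀ : m ≪ m₀ := (Measure.AbsolutelyContinuous.rfl.smul_left a).add_left (h₁₀.smul_left b)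
  have hmm₁ : m ≪ m₁ := (h₀₁.smul_left a).add_left (Measure.AbsolutelyContinuous.rfl.smul_left b)
  have hw : ∀ᵐ x ∂m, a * m₀.rnDeriv m x + b * m₁.rnDeriv m x = 1 := by
    filter_upwards [rnDeriv_smul_add_smul m₀ m₁ m ha hb, Measure.rnDeriv_self m] with x h h'
    rw [← h, h']
  have hdens : ∀ᵐ x ∂m, (a • η₀ + b • η₁).rnDeriv m x
      = a * m₀.rnDeriv m x * η₀.rnDeriv m₀ x + b * m₁.rnDeriv m x * η₁.rnDeriv m₁ x := by
    filter_upwards [rnDeriv_smul_add_smul η₀ η₁ m ha hb,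
      Measure.rnDeriv_mul_rnDeriv hη₀ (κ := m), Measure.rnDeriv_mul_rnDeriv hη₁ (κ := m)]
      with x h h₀ h₁
    rw [h, ← h₀, ← h₁, Pi.mul_apply, Pi.mul_apply]
    ring
  have hr₀ := hmm₀.ae_le (ae_rnDeriv_ne_zero_ne_top hη₀ hm₀)
  have hr₁ := hmm₁.ae_le (ae_rnDeriv_ne_zero_ne_top hη₁ hm₁)
  have hfc := hf.convexOn.continuousOn isOpen_Ioi
  have hR₀ : AEMeasurable
      (fun x => a * m₀.rnDeriv m x * ENNReal.ofReal (f (η₀.rnDeriv m₀ x).toReal)) m :=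
    ((Measure.measurable_rnDeriv m₀ m).const_mul a).aemeasurable.mul
      (hfc.aemeasurable_ofReal_comp_toReal (Measure.measurable_rnDeriv η₀ m₀) hr₀)
  have hR₁ : AEMeasurable
      (fun x => b * m₁.rnDeriv m x * ENNReal.ofReal (f (η₁.rnDeriv m₁ x).toReal)) m :=
    ((Measure.measurable_rnDeriv m₁ m).const_mul b).aemeasurable.mul
      (hfc.aemeasurable_ofReal_comp_toReal (Measure.measurable_rnDeriv η₁ m₁) hr₁)
  refine ⟨_, hR₀.add hR₁, ?_, ?_⟩
  · simp only [Pi.add_apply]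
    rw [lintegral_add_left' hR₀,
      lintegral_const_mul_rnDeriv_mul hm₀m ha
        (hfc.aemeasurable_ofReal_comp_toReal (Measure.measurable_rnDeriv η₀ m₀) hr₀),
      lintegral_const_mul_rnDeriv_mul hm₁m hb
        (hfc.aemeasurable_ofReal_comp_toReal (Measure.measurable_rnDeriv η₁ m₁) hr₁)]
    rfl
  · filter_upwards [hw, hdens, hr₀, hr₁, ae_rnDeriv_ne_zero_ne_top hm₀m hmm₀,
      ae_rnDeriv_ne_zero_ne_top hm₁m hmm₁] with x hw hdens hr₀ hr₁ hw₀ hw₁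
    rw [hdens]
    exact ⟨ofReal_apply_toReal_add_le hf hfpos (mul_ne_zero ha₀ hw₀.1) (mul_ne_zero hb₀ hw₁.1)
        hw hr₀.1 hr₀.2 hr₁.1 hr₁.2,
      ofReal_apply_toReal_add_lt hf hfpos (mul_ne_zero ha₀ hw₀.1) (mul_ne_zero hb₀ hw₁.1)
        hw hr₀.1 hr₀.2 hr₁.1 hr₁.2⟩

lemma fDivE_smul_add_le (hf : StrictConvexOn ℝ (Set.Ioi 0) f)
    (hfpos : ∀ x ∈ Set.Ioi (0:ℝ), 0 ≤ f x) {η₀ η₁ m₀ m₁ : Measure X}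
    [IsFiniteMeasure η₀] [IsFiniteMeasure η₁] [IsFiniteMeasure m₀] [IsFiniteMeasure m₁]
    (hη₀ : η₀ ≪ m₀) (hm₀ : m₀ ≪ η₀) (hη₁ : η₁ ≪ m₁) (hm₁ : m₁ ≪ η₁)
    (h₀₁ : m₀ ≪ m₁) (h₁₀ : m₁ ≪ m₀) {a b : ℝ≥0∞} (ha₀ : a ≠ 0) (ha : a ≠ ∞)
    (hb₀ : b ≠ 0) (hb : b ≠ ∞) :
    fDivE f (a • η₀ + b • η₁) (a • m₀ + b • m₁) ≤ a * fDivE f η₀ m₀ + b * fDivE f η₁ m₁ := by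
  obtain ⟨R, -, hR, hle⟩ :=
    exists_fDivE_smul_add_majorant hf hfpos hη₀ hm₀ hη₁ hm₁ h₀₁ h₁₀ ha₀ ha hb₀ hb
  rw [← hR]
  exact lintegral_mono_ae (hle.mono fun x h => h.1)

lemma fDivE_smul_add_lt (hf : StrictConvexOn ℝ (Set.Ioi 0) f)
    (hfpos : ∀ x ∈ Set.Ioi (0:ℝ), 0 ≤ f x) {η₀ η₁ m₀ m₁ : Measure X}
    [IsFiniteMeasure η₀] [IsFiniteMeasure η₁] [IsFiniteMeasure m₀] [IsFiniteMeasure m₁]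
    (hη₀ : η₀ ≪ m₀) (hm₀ : m₀ ≪ η₀) (hη₁ : η₁ ≪ m₁) (hm₁ : m₁ ≪ η₁)
    (h₀₁ : m₀ ≪ m₁) (h₁₀ : m₁ ≪ m₀) {a b : ℝ≥0∞} (ha₀ : a ≠ 0) (ha : a ≠ ∞)
    (hb₀ : b ≠ 0) (hb : b ≠ ∞) (hD₀ : fDivE f η₀ m₀ ≠ ∞) (hD₁ : fDivE f η₁ m₁ ≠ ∞)
    (hne : ¬ η₀.rnDeriv m₀ =ᵐ[m₀] η₁.rnDeriv m₁) :
    fDivE f (a • η₀ + b • η₁) (a • m₀ + b • m₁) < a * fDivE f η₀ m₀ + b * fDivE f η₁ m₁ := by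
  obtain ⟨R, hRm, hR, hle⟩ :=
    exists_fDivE_smul_add_majorant hf hfpos hη₀ hm₀ hη₁ hm₁ h₀₁ h₁₀ ha₀ ha hb₀ hb
  have hm₀m : m₀ ≪ a • m₀ + b • m₁ := (Measure.absolutelyContinuous_smul ha₀).add_right _
  have hfreq : ∃ᵐ x ∂(a • m₀ + b • m₁), η₀.rnDeriv m₀ x ≠ η₁.rnDeriv m₁ x := fun h =>
    hne (hm₀m.ae_le (h.mono fun x hx => not_not.1 hx))
  have hRfin : ∫⁻ x, R x ∂(a • m₀ + b • m₁) ≠ ∞ := by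
    rw [hR]
    exact ENNReal.add_ne_top.2 ⟨ENNReal.mul_ne_top ha hD₀, ENNReal.mul_ne_top hb hD₁⟩
  have hle' : fDivE f (a • η₀ + b • η₁) (a • m₀ + b • m₁) ≤ ∫⁻ x, R x ∂(a • m₀ + b • m₁) :=
    lintegral_mono_ae (hle.mono fun x h => h.1)
  rw [← hR]
  exact lintegral_strict_mono_of_ae_le_of_frequently_ae_lt hRm (ne_top_of_le_ne_top hRfin hle')
    (hle.mono fun x h => h.1) ((hfreq.and_eventually hle).mono fun x h => (h.2.2 h.1).ne)

end Divergence

def IsQuasiInvariant {X : Type*} [MeasurableSpace X] (G : Type*) [Group G] [MulAction G X]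
    (ν : Measure X) : Prop :=
  ∀ g : G, ν.map (g • ·) ≪ ν ∧ ν ≪ ν.map (g • ·)

def IsErgodicAction {X : Type*} [MeasurableSpace X] (G : Type*) [Group G] [MulAction G X]
    (ν : Measure X) : Prop :=
  ∀ s : Set X, MeasurableSet s → (∀ g : G, (g • ·) ⁻¹' s = s) → ν s = 0 ∨ ν sᶜ = 0

section QuasiInvariance

variable {G X : Type*} [Group G] [MulAction G X] [MeasurableSpace X] [MeasurableConstSMul G X]
  {ν : Measure X}

lemma IsQuasiInvariant.of_equiv (hν : IsQuasiInvariant G ν) {μ : Measure X} (hμν : μ ≪ ν)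
    (hνμ : ν ≪ μ) : IsQuasiInvariant G μ := fun g =>
  ⟨((hμν.map (measurable_const_smul g)).trans (hν g).1).trans hνμ,
    (hμν.trans (hν g).2).trans (hνμ.map (measurable_const_smul g))⟩

lemma IsQuasiInvariant.quasiMeasurePreserving (hν : IsQuasiInvariant G ν) (g : G) :
    Measure.QuasiMeasurePreserving (g • ·) ν ν :=
  ⟨measurable_const_smul g, (hν g).1⟩

lemma IsQuasiInvariant.comp_smul_ae_eq_of_mem_closure {β : Type*} (hν : IsQuasiInvariant G ν)
    {φ : X → β} {S : Set G} (hS : ∀ g ∈ S, (fun x => φ (g • x)) =ᵐ[ν] φ) {g : G}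
    (hg : g ∈ Subgroup.closure S) : (fun x => φ (g • x)) =ᵐ[ν] φ := by
  induction hg using Subgroup.closure_induction with
  | mem g hg => exact hS g hg
  | one => simp
  | mul g h _ _ hg hh =>
    simp only [mul_smul]
    exact ((hν.quasiMeasurePreserving h).ae_eq hg).trans hh
  | inv g _ hg =>
    have := (hν.quasiMeasurePreserving g⁻¹).ae_eq hg
    simp only [Function.comp_def, smul_inv_smul] at this
    exact this.symm

end QuasiInvariance

section Ergodic

variable {G X : Type*} [Group G] [Countable G] [MulAction G X] [MeasurableSpace X]
  [MeasurableConstSMul G X] {ν : Measure X}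

lemma measure_eq_zero_or_compl_of_ae_invariant (herg : IsErgodicAction G ν)
    {s : Set X} (hs : MeasurableSet s) (hinv : ∀ g : G, (g • ·) ⁻¹' s =ᵐ[ν] s) :
    ν s = 0 ∨ ν sᶜ = 0 := by
  set t := ⋂ g : G, (g • ·) ⁻¹' s
  have hts : t =ᵐ[ν] s := by
    simpa only [Set.iInter_const] using Filter.EventuallyEq.countable_iInter hinv
  have htinv : ∀ g : G, (g • ·) ⁻¹' t = t := fun g => by
    ext x
    simp only [t, Set.preimage_iInter, Set.mem_iInter, Set.mem_preimage, smul_smul]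
    exact (Equiv.mulRight g).forall_congr_right (q := fun i => i • x ∈ s)
  rw [← measure_congr hts, ← measure_congr hts.compl]
  exact herg t (.iInter fun g => measurable_const_smul g hs) htinv

lemma exists_ae_eq_const_of_ae_invariant {β : Type*} [MeasurableSpace β]
    [MeasurableSpace.CountablySeparated β] [Nonempty β] (herg : IsErgodicAction G ν)
    {φ : X → β} (hφ : Measurable φ) (hinv : ∀ g : G, (fun x => φ (g • x)) =ᵐ[ν] φ) :
    ∃ c, φ =ᵐ[ν] fun _ => c := by
  refine Filter.exists_eventuallyEq_const_of_forall_separating MeasurableSet fun U hU => ?_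
  have hpre : ∀ g : G, (g • ·) ⁻¹' (φ ⁻¹' U) =ᵐ[ν] φ ⁻¹' U := fun g =>
    (hinv g).mono fun x hx => congrArg (· ∈ U) hx
  rcases measure_eq_zero_or_compl_of_ae_invariant herg (hφ hU) hpre with h | h
  · exact .inr (measure_eq_zero_iff_ae_notMem.1 h)
  · exact .inl (ae_iff.2 h)

lemma eq_of_rnDeriv_map_smul_ae_eq (hqi : IsQuasiInvariant G ν) (herg : IsErgodicAction G ν)
    {S : Set G} (hS : Subgroup.closure S = ⊤) {ν₀ ν₁ : Measure X}
    [IsProbabilityMeasure ν₀] [IsProbabilityMeasure ν₁]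
    (h₀ : ν₀ ≪ ν) (h₀' : ν ≪ ν₀) (h₁ : ν₁ ≪ ν) (h₁' : ν ≪ ν₁)
    (heq : ∀ g ∈ S, (ν₀.map (g⁻¹ • ·)).rnDeriv ν₀ =ᵐ[ν₀] (ν₁.map (g⁻¹ • ·)).rnDeriv ν₁) :
    ν₀ = ν₁ := by
  have hqi₀ := hqi.of_equiv h₀ h₀'
  have hqi₁ := hqi.of_equiv h₁ h₁'
  have hinv : ∀ g ∈ S⁻¹, (fun x => ν₁.rnDeriv ν₀ (g • x)) =ᵐ[ν] ν₁.rnDeriv ν₀ := fun g hg =>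
    h₀'.ae_le <| rnDeriv_comp_ae_eq_of_rnDeriv_map_ae_eq (measurableEmbedding_const_smul g)
      (h₁.trans h₀') (hqi₀ g).1 (hqi₀ g).2 (hqi₁ g).1 (by simpa using heq g⁻¹ hg)
  obtain ⟨c, hc⟩ := exists_ae_eq_const_of_ae_invariant herg (Measure.measurable_rnDeriv ν₁ ν₀)
    fun g => hqi.comp_smul_ae_eq_of_mem_closure hinv (by simp [Subgroup.closure_inv, hS])
  exact eq_of_rnDeriv_ae_eq_const (h₁.trans h₀') (h₀.ae_le hc)

end Ergodic

section Entropy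

variable {G X : Type*} [Group G] [MulAction G X] [MeasurableSpace X] [MeasurableConstSMul G X]
  {f : ℝ → ℝ} {lam : G → ℝ}

lemma fEntropy_smul_add_lt (hf : StrictConvexOn ℝ (Set.Ioi 0) f)
    (hfpos : ∀ x ∈ Set.Ioi (0:ℝ), 0 ≤ f x) {ν₀ ν₁ : Measure X}
    [IsFiniteMeasure ν₀] [IsFiniteMeasure ν₁] (hqi₀ : IsQuasiInvariant G ν₀)
    (hqi₁ : IsQuasiInvariant G ν₁) (h₀₁ : ν₀ ≪ ν₁) (h₁₀ : ν₁ ≪ ν₀) {a b : ℝ≥0∞}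
    (ha₀ : a ≠ 0) (ha : a ≠ ∞) (hb₀ : b ≠ 0) (hb : b ≠ ∞)
    (hfin₀ : fEntropy f lam ν₀ ≠ ∞) (hfin₁ : fEntropy f lam ν₁ ≠ ∞) {g : G} (hg : 0 < lam g)
    (hne : ¬ (ν₀.map (g⁻¹ • ·)).rnDeriv ν₀ =ᵐ[ν₀] (ν₁.map (g⁻¹ • ·)).rnDeriv ν₁) :
    fEntropy f lam (a • ν₀ + b • ν₁) < a * fEntropy f lam ν₀ + b * fEntropy f lam ν₁ := by
  have hmap : ∀ h : G, (a • ν₀ + b • ν₁).map (h⁻¹ • ·)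
      = a • ν₀.map (h⁻¹ • ·) + b • ν₁.map (h⁻¹ • ·) := fun h => by
    rw [Measure.map_add _ _ (measurable_const_smul h⁻¹), Measure.map_smul, Measure.map_smul]
  have hterm : ∀ h : G,
      ENNReal.ofReal (lam h) * fDivE f ((a • ν₀ + b • ν₁).map (h⁻¹ • ·)) (a • ν₀ + b • ν₁)
        ≤ ENNReal.ofReal (lam h) * (a * fDivE f (ν₀.map (h⁻¹ • ·)) ν₀
          + b * fDivE f (ν₁.map (h⁻¹ • ·)) ν₁) := fun h => by
    rw [hmap]
    exact mul_le_mul_right (fDivE_smul_add_le hf hfpos (hqi₀ h⁻¹).1 (hqi₀ h⁻¹).2 (hqi₁ h⁻¹).1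
      (hqi₁ h⁻¹).2 h₀₁ h₁₀ ha₀ ha hb₀ hb) _
  have hsum : ∑' h : G, ENNReal.ofReal (lam h) * (a * fDivE f (ν₀.map (h⁻¹ • ·)) ν₀
        + b * fDivE f (ν₁.map (h⁻¹ • ·)) ν₁)
      = a * fEntropy f lam ν₀ + b * fEntropy f lam ν₁ := by
    simp_rw [mul_add, mul_left_comm (ENNReal.ofReal _)]
    rw [ENNReal.tsum_add, ENNReal.tsum_mul_left, ENNReal.tsum_mul_left]
    rfl
  have hlam : ENNReal.ofReal (lam g) ≠ 0 := (ENNReal.ofReal_pos.2 hg).ne'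
  have hD : ∀ ν' : Measure X, fEntropy f lam ν' ≠ ∞ → fDivE f (ν'.map (g⁻¹ • ·)) ν' ≠ ∞ :=
    fun ν' hfin htop => ENNReal.ne_top_of_tsum_ne_top hfin g (by
      simp only [htop, ENNReal.mul_top hlam])
  have hstrict := (ENNReal.mul_lt_mul_iff_right hlam ENNReal.ofReal_ne_top).2
    (fDivE_smul_add_lt hf hfpos (hqi₀ g⁻¹).1 (hqi₀ g⁻¹).2 (hqi₁ g⁻¹).1 (hqi₁ g⁻¹).2 h₀₁ h₁₀
      ha₀ ha hb₀ hb (hD ν₀ hfin₀) (hD ν₁ hfin₁) hne)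
  rw [← hmap] at hstrict
  rw [← hsum]
  refine ENNReal.tsum_lt_tsum (ne_top_of_le_ne_top ?_ (ENNReal.tsum_le_tsum hterm)) hterm hstrict
  rw [hsum]
  exact ENNReal.add_ne_top.2 ⟨ENNReal.mul_ne_top ha hfin₀, ENNReal.mul_ne_top hb hfin₁⟩

lemma fEntropy_smul_add_lt_of_isErgodicAction [Countable G] (hf : StrictConvexOn ℝ (Set.Ioi 0) f)
    (hfpos : ∀ x ∈ Set.Ioi (0:ℝ), 0 ≤ f x) (hlam0 : ∀ g, 0 ≤ lam g)
    (hgen : Subgroup.closure {g : G | lam g ≠ 0} = ⊤)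
    {ν : Measure X} (hqi : IsQuasiInvariant G ν) (herg : IsErgodicAction G ν)
    {ν₀ ν₁ : Measure X} [IsProbabilityMeasure ν₀] [IsProbabilityMeasure ν₁]
    (h₀ : ν₀ ≪ ν) (h₀' : ν ≪ ν₀) (h₁ : ν₁ ≪ ν) (h₁' : ν ≪ ν₁) (hne : ν₀ ≠ ν₁)
    (hfin₀ : fEntropy f lam ν₀ ≠ ∞) (hfin₁ : fEntropy f lam ν₁ ≠ ∞) {a b : ℝ≥0∞}
    (ha₀ : a ≠ 0) (ha : a ≠ ∞) (hb₀ : b ≠ 0) (hb : b ≠ ∞) :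
    fEntropy f lam (a • ν₀ + b • ν₁) < a * fEntropy f lam ν₀ + b * fEntropy f lam ν₁ := by
  obtain ⟨g, hg, hcoc⟩ : ∃ g ∈ {g : G | lam g ≠ 0},
      ¬ (ν₀.map (g⁻¹ • ·)).rnDeriv ν₀ =ᵐ[ν₀] (ν₁.map (g⁻¹ • ·)).rnDeriv ν₁ := by
    by_contra! h
    exact hne (eq_of_rnDeriv_map_smul_ae_eq hqi herg hgen h₀ h₀' h₁ h₁' h)
  exact fEntropy_smul_add_lt hf hfpos (hqi.of_equiv h₀ h₀') (hqi.of_equiv h₁ h₁') (h₀.trans h₁')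
    (h₁.trans h₀') ha₀ ha hb₀ hb hfin₀ hfin₁ ((hlam0 g).lt_of_ne' hg) hcoc

end Entropy

lemma eq_of_eq_iInf_of_smul_add_lt {X : Type*} [MeasurableSpace X] {P : Measure X → Prop}
    {F : Measure X → ℝ≥0∞} {a b : ℝ≥0∞} (hab : a + b = 1) {μ₀ μ₁ : Measure X}
    (hP : P (a • μ₀ + b • μ₁)) (hlt : μ₀ ≠ μ₁ → F (a • μ₀ + b • μ₁) < a * F μ₀ + b * F μ₁)
    (hmin₀ : F μ₀ = ⨅ μ : {μ // P μ}, F μ) (hmin₁ : F μ₁ = ⨅ μ : {μ // P μ}, F μ) :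
    μ₀ = μ₁ := by
  by_contra hne
  have hlt := hlt hne
  rw [hmin₀, hmin₁, ← add_mul, hab, one_mul] at hlt
  exact hlt.not_ge (iInf_le_of_le ⟨_, hP⟩ le_rfl)

theorem entropy_strictly_convex_general {G X : Type*} [Group G] [Countable G]
    [MeasurableSpace G]
    [MeasurableSpace X] [MulAction G X] [MeasurableSMul G X]
    (f : ℝ → ℝ) (hf : StrictConvexOn ℝ (Set.Ioi (0:ℝ)) f)
    (hfpos : ∀ x ∈ Set.Ioi (0:ℝ), 0 ≤ f x)
    (lam : G → ℝ) (hlam0 : ∀ g, 0 ≤ lam g)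
    (hgen : Subgroup.closure {g : G | lam g ≠ 0} = ⊤)
    (ν : Measure X) [IsProbabilityMeasure ν]
    (hqi : ∀ g : G, ν.map (fun x => g • x) ≪ ν ∧ ν ≪ ν.map (fun x => g • x))
    (herg : ∀ s : Set X, MeasurableSet s →
      (∀ g : G, (fun x => g • x) ⁻¹' s = s) → ν s = 0 ∨ ν sᶜ = 0) :
    (∀ ν₀ ν₁ : Measure X, IsProbabilityMeasure ν₀ → IsProbabilityMeasure ν₁ →
      ν₀ ≪ ν → ν ≪ ν₀ → ν₁ ≪ ν → ν ≪ ν₁ → ν₀ ≠ ν₁ →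
      fEntropy f lam ν₀ ≠ ⊤ → fEntropy f lam ν₁ ≠ ⊤ →
      ∀ t : ℝ, 0 < t → t < 1 →
        fEntropy f lam ((ENNReal.ofReal (1 - t)) • ν₀ + (ENNReal.ofReal t) • ν₁)
          < (ENNReal.ofReal (1 - t)) * fEntropy f lam ν₀
            + (ENNReal.ofReal t) * fEntropy f lam ν₁)
    ∧ ∀ m₀ m₁ : Measure X, IsProbabilityMeasure m₀ → IsProbabilityMeasure m₁ →
        m₀ ≪ ν → ν ≪ m₀ → m₁ ≪ ν → ν ≪ m₁ →
        fEntropy f lam m₀ ≠ ⊤ → fEntropy f lam m₁ ≠ ⊤ →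
        fEntropy f lam m₀ =
          (⨅ m : {m : Measure X // IsProbabilityMeasure m ∧ m ≪ ν ∧ ν ≪ m},
            fEntropy f lam (m : Measure X)) →
        fEntropy f lam m₁ =
          (⨅ m : {m : Measure X // IsProbabilityMeasure m ∧ m ≪ ν ∧ ν ≪ m},
            fEntropy f lam (m : Measure X)) →
        m₀ = m₁ := by
  have hhalf : ENNReal.ofReal (1 - 1 / 2) + ENNReal.ofReal (1 / 2) = 1 := by
    rw [← ENNReal.ofReal_add] <;> norm_num
  refine ⟨fun ν₀ ν₁ _ _ h₀ h₀' h₁ h₁' hne hfin₀ hfin₁ t ht0 ht1 =>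
      fEntropy_smul_add_lt_of_isErgodicAction hf hfpos hlam0 hgen hqi herg h₀ h₀' h₁ h₁' hne
        hfin₀ hfin₁ (ENNReal.ofReal_pos.2 (by linarith)).ne' ENNReal.ofReal_ne_top
        (ENNReal.ofReal_pos.2 ht0).ne' ENNReal.ofReal_ne_top,
    fun m₀ m₁ _ _ h₀ h₀' h₁ h₁' hfin₀ hfin₁ => eq_of_eq_iInf_of_smul_add_lt hhalf
      ⟨isProbabilityMeasure_smul_add hhalf, (h₀.smul_left _).add_left (h₁.smul_left _),
        h₀'.trans ((Measure.absolutelyContinuous_smul (by norm_num)).add_right _)⟩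
      fun hne => fEntropy_smul_add_lt_of_isErgodicAction hf hfpos hlam0 hgen hqi herg
        h₀ h₀' h₁ h₁' hne hfin₀ hfin₁ (by norm_num) ENNReal.ofReal_ne_top (by norm_num)
        ENNReal.ofReal_ne_top⟩

/-- For a strictly convex `f` with `f 1 = 0`, a generating probability measure
`λ` on a countable group `G`, and an ergodic quasi-invariant `G`-space `(X,ν)`,
the entropy `h_{λ,f}` is strictly convex on the measures of the class of `ν`
with finite entropy; in particular at most one measure in the class attains
the infimum `I_{λ,f}(X)`. -/
theorem entropy_strictly_convex {G X : Type*} [Group G] [Countable G]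
    [MeasurableSpace G] [MeasurableSingletonClass G]
    [MeasurableSpace X] [MulAction G X] [MeasurableSMul G X]
    (f : ℝ → ℝ) (hf : StrictConvexOn ℝ (Set.Ioi (0:ℝ)) f) (hf1 : f 1 = 0)
    (hfpos : ∀ x ∈ Set.Ioi (0:ℝ), 0 ≤ f x)
    (lam : G → ℝ) (hlam0 : ∀ g, 0 ≤ lam g) (hlam1 : ∑' g, lam g = 1)
    (hgen : Subgroup.closure {g : G | lam g ≠ 0} = ⊤)
    (ν : Measure X) [IsProbabilityMeasure ν]
    (hqi : ∀ g : G, ν.map (fun x => g • x) ≪ ν ∧ ν ≪ ν.map (fun x => g • x))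
    (herg : ∀ s : Set X, MeasurableSet s →
      (∀ g : G, (fun x => g • x) ⁻¹' s = s) → ν s = 0 ∨ ν sᶜ = 0) :
    (∀ ν₀ ν₁ : Measure X, IsProbabilityMeasure ν₀ → IsProbabilityMeasure ν₁ →
      ν₀ ≪ ν → ν ≪ ν₀ → ν₁ ≪ ν → ν ≪ ν₁ → ν₀ ≠ ν₁ →
      fEntropy f lam ν₀ ≠ ⊤ → fEntropy f lam ν₁ ≠ ⊤ →
      ∀ t : ℝ, 0 < t → t < 1 →
        fEntropy f lam ((ENNReal.ofReal (1 - t)) • ν₀ + (ENNReal.ofReal t) • ν₁)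
          < (ENNReal.ofReal (1 - t)) * fEntropy f lam ν₀
            + (ENNReal.ofReal t) * fEntropy f lam ν₁)
    ∧ ∀ m₀ m₁ : Measure X, IsProbabilityMeasure m₀ → IsProbabilityMeasure m₁ →
        m₀ ≪ ν → ν ≪ m₀ → m₁ ≪ ν → ν ≪ m₁ →
        fEntropy f lam m₀ ≠ ⊤ → fEntropy f lam m₁ ≠ ⊤ →
        fEntropy f lam m₀ =
          (⨅ m : {m : Measure X // IsProbabilityMeasure m ∧ m ≪ ν ∧ ν ≪ m},
            fEntropy f lam (m : Measure X)) →
        fEntropy f lam m₁ =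
          (⨅ m : {m : Measure X // IsProbabilityMeasure m ∧ m ≪ ν ∧ ν ≪ m},
            fEntropy f lam (m : Measure X)) →
        m₀ = m₁ :=
  entropy_strictly_convex_general f hf hfpos lam hlam0 hgen ν hqi herg
end

section
/- Let G be a countable group, f strictly convex with f(1)=0, λ a generating probability measure on G. If κ is a probability measure on G fully supported with h_{λ,f}(κ) = I_{λ,f}(G) < ∞ (where G acts on itself by left translation), then G is finite and κ is the uniform measure. -/
open MeasureTheory

/-!
The summand `κ(x) f(κ(gx)/κ(x))` of `h_{λ,f}(κ)` is the perspective of `f`, jointly convex in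
`(κ(x), κ(gx))` and strictly so between pairs with different ratios. Right translation by `h` commutes
with the left action, so it preserves `h_{λ,f}`; averaging a minimizer `κ` with its right
translate cannot lower the entropy, and strict convexity forces
`κ(gx)/κ(x) = κ(gxh)/κ(xh)` whenever `λ(g) > 0`. Hence `κ(g·)` is a constant multiple of `κ`,
the constant is `1` since both have mass `1`, and as the support of `λ` generates `G`, `κ` is
left-invariant. A left-invariant probability measure on a countable group forces the group to be
finite and the measure to be uniform.
-/

open scoped ENNReal

theorem ConvexOn.perspective_add_le {f : ℝ → ℝ} (hf : ConvexOn ℝ (Set.Ioi 0) f)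
    {a b c d : ℝ} (ha : 0 < a) (hb : 0 < b) (hc : 0 < c) (hd : 0 < d) :
    (a + b) * f ((c + d) / (a + b)) ≤ a * f (c / a) + b * f (d / b) := by
  have hab : 0 < a + b := add_pos ha hb
  have key := hf.2 (div_pos hc ha) (div_pos hd hb) (div_pos ha hab).le (div_pos hb hab).le
    (by field_simp)
  have hmid : (a / (a + b)) • (c / a) + (b / (a + b)) • (d / b) = (c + d) / (a + b) := by
    simp only [smul_eq_mul]; field_simp
  rw [hmid, smul_eq_mul, smul_eq_mul] at key
  calc (a + b) * f ((c + d) / (a + b))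
      ≤ (a + b) * (a / (a + b) * f (c / a) + b / (a + b) * f (d / b)) := by gcongr
    _ = a * f (c / a) + b * f (d / b) := by field_simp

theorem StrictConvexOn.perspective_add_lt {f : ℝ → ℝ} (hf : StrictConvexOn ℝ (Set.Ioi 0) f)
    {a b c d : ℝ} (ha : 0 < a) (hb : 0 < b) (hc : 0 < c) (hd : 0 < d) (hne : c / a ≠ d / b) :
    (a + b) * f ((c + d) / (a + b)) < a * f (c / a) + b * f (d / b) := by
  have hab : 0 < a + b := add_pos ha hb
  have key := hf.2 (div_pos hc ha) (div_pos hd hb) hne (div_pos ha hab) (div_pos hb hab)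
    (by field_simp)
  have hmid : (a / (a + b)) • (c / a) + (b / (a + b)) • (d / b) = (c + d) / (a + b) := by
    simp only [smul_eq_mul]; field_simp
  rw [hmid, smul_eq_mul, smul_eq_mul] at key
  calc (a + b) * f ((c + d) / (a + b))
      < (a + b) * (a / (a + b) * f (c / a) + b / (a + b) * f (d / b)) := by gcongr
    _ = a * f (c / a) + b * f (d / b) := by field_simp

section EntropyOfMasses

variable {G : Type*} [Group G]

/-- The `(g, x)` summand of `h_{λ,f}(μ)` for a measure `μ` with point masses `w`. -/
noncomputable def fEntropyTerm (f : ℝ → ℝ) (lam w : G → ℝ) (g x : G) : ℝ≥0∞ :=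
  ENNReal.ofReal (lam g) * ENNReal.ofReal (w x * f (w (g * x) / w x))

noncomputable def fEntropySum (f : ℝ → ℝ) (lam w : G → ℝ) : ℝ≥0∞ :=
  ∑' g, ∑' x, fEntropyTerm f lam w g x

variable {f : ℝ → ℝ} {lam w w₁ w₂ : G → ℝ}

theorem fEntropyTerm_add_le (hf : ConvexOn ℝ (Set.Ioi 0) f) (hw₁ : ∀ x, 0 < w₁ x)
    (hw₂ : ∀ x, 0 < w₂ x) (g x : G) :
    fEntropyTerm f lam (w₁ + w₂) g x ≤ fEntropyTerm f lam w₁ g x + fEntropyTerm f lam w₂ g x := by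
  simp only [fEntropyTerm, Pi.add_apply, ← mul_add]
  gcongr
  exact (ENNReal.ofReal_le_ofReal (hf.perspective_add_le (hw₁ x) (hw₂ x) (hw₁ _) (hw₂ _))).trans
    ENNReal.ofReal_add_le

theorem fEntropyTerm_add_lt (hf : StrictConvexOn ℝ (Set.Ioi 0) f)
    (hf0 : ∀ x ∈ Set.Ioi (0 : ℝ), 0 ≤ f x) (hw₁ : ∀ x, 0 < w₁ x) (hw₂ : ∀ x, 0 < w₂ x)
    {g : G} (hg : 0 < lam g) {x : G} (hne : w₁ (g * x) / w₁ x ≠ w₂ (g * x) / w₂ x) :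
    fEntropyTerm f lam (w₁ + w₂) g x < fEntropyTerm f lam w₁ g x + fEntropyTerm f lam w₂ g x := by
  simp only [fEntropyTerm, Pi.add_apply, ← mul_add]
  have hnonneg : ∀ w : G → ℝ, (∀ x, 0 < w x) → 0 ≤ w x * f (w (g * x) / w x) :=
    fun w hw => mul_nonneg (hw x).le (hf0 _ (div_pos (hw _) (hw x)))
  rw [← ENNReal.ofReal_add (hnonneg w₁ hw₁) (hnonneg w₂ hw₂)]
  have hlt := hf.perspective_add_lt (hw₁ x) (hw₂ x) (hw₁ (g * x)) (hw₂ (g * x)) hne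
  refine ENNReal.mul_lt_mul_right (ENNReal.ofReal_pos.2 hg).ne' ENNReal.ofReal_ne_top ?_
  exact ENNReal.ofReal_lt_ofReal_iff'.2
    ⟨hlt, (hnonneg (w₁ + w₂) fun y => add_pos (hw₁ y) (hw₂ y)).trans_lt hlt⟩

theorem div_eq_div_of_add_le_fEntropySum (hf : StrictConvexOn ℝ (Set.Ioi 0) f)
    (hf0 : ∀ x ∈ Set.Ioi (0 : ℝ), 0 ≤ f x) (hw₁ : ∀ x, 0 < w₁ x) (hw₂ : ∀ x, 0 < w₂ x)
    (hfin : fEntropySum f lam w₁ + fEntropySum f lam w₂ ≠ ⊤)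
    (hle : fEntropySum f lam w₁ + fEntropySum f lam w₂ ≤ fEntropySum f lam (w₁ + w₂))
    {g : G} (hg : 0 < lam g) (x : G) : w₁ (g * x) / w₁ x = w₂ (g * x) / w₂ x := by
  by_contra hne
  simp only [fEntropySum, ← ENNReal.tsum_prod, ← ENNReal.tsum_add] at hfin hle
  have hterm (p : G × G) := fEntropyTerm_add_le (lam := lam) hf.convexOn hw₁ hw₂ p.1 p.2
  exact hle.not_gt <| ENNReal.tsum_lt_tsum (ne_top_of_le_ne_top hfin (ENNReal.tsum_le_tsum hterm))
    hterm (i := (g, x)) (fEntropyTerm_add_lt hf hf0 hw₁ hw₂ hg hne)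

theorem fEntropySum_smul {c : ℝ} (hc : 0 < c) (w : G → ℝ) :
    fEntropySum f lam (c • w) = ENNReal.ofReal c * fEntropySum f lam w := by
  simp only [fEntropySum, ← ENNReal.tsum_mul_left]
  refine tsum_congr fun g => tsum_congr fun x => ?_
  rw [fEntropyTerm, fEntropyTerm, Pi.smul_apply, Pi.smul_apply, smul_eq_mul, smul_eq_mul,
    mul_div_mul_left _ _ hc.ne', mul_assoc, ENNReal.ofReal_mul hc.le, mul_left_comm]

theorem fEntropySum_comp_mul_right (w : G → ℝ) (h : G) :
    fEntropySum f lam (fun x => w (x * h)) = fEntropySum f lam w := by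
  refine tsum_congr fun g => ?_
  simpa only [fEntropyTerm, Equiv.coe_mulRight, mul_assoc] using
    (Equiv.mulRight h).tsum_eq (fEntropyTerm f lam w g)

theorem div_eq_div_mul_right_of_le_fEntropySum_midpoint (hf : StrictConvexOn ℝ (Set.Ioi 0) f)
    (hf0 : ∀ x ∈ Set.Ioi (0 : ℝ), 0 ≤ f x) (hw : ∀ x, 0 < w x) (hfin : fEntropySum f lam w ≠ ⊤)
    {h : G} (hle : fEntropySum f lam w ≤ fEntropySum f lam ((2 : ℝ)⁻¹ • (w + fun x => w (x * h))))
    {g : G} (hg : 0 < lam g) (x : G) : w (g * x) / w x = w (g * x * h) / w (x * h) := by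
  rw [fEntropySum_smul (by norm_num), ENNReal.ofReal_inv_of_pos two_pos, ENNReal.ofReal_ofNat,
    ← ENNReal.mul_le_iff_le_inv two_ne_zero ENNReal.ofNat_ne_top, two_mul] at hle
  have hS := fEntropySum_comp_mul_right (f := f) (lam := lam) w h
  simpa only [mul_assoc] using div_eq_div_of_add_le_fEntropySum hf hf0 hw (fun y => hw (y * h))
    (by rw [hS]; exact ENNReal.add_ne_top.2 ⟨hfin, hfin⟩) (by rwa [hS]) hg x

end EntropyOfMasses

section Measures

variable {G : Type*} [Group G] [Countable G] [MeasurableSpace G] [MeasurableSingletonClass G]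

theorem map_inv_smul_eq_withDensity {μ : Measure G} (hμ : ∀ x, μ {x} ≠ 0)
    (hμ' : ∀ x, μ {x} ≠ ⊤) (g : G) :
    μ.map (fun x => g⁻¹ • x) = μ.withDensity fun x => μ {g * x} / μ {x} := by
  refine Measure.ext_of_singleton fun x => ?_
  have hpre : (fun y : G => g⁻¹ • y) ⁻¹' {x} = {g * x} := by
    ext y
    simp
  rw [Measure.map_apply (measurable_of_countable _) (measurableSet_singleton x), hpre,
    withDensity_apply _ (measurableSet_singleton x), lintegral_singleton,
    ENNReal.div_mul_cancel (hμ x) (hμ' x)]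

theorem fEntropy_eq_fEntropySum (f : ℝ → ℝ) (lam : G → ℝ) (μ : Measure G) [IsFiniteMeasure μ]
    (hμ : ∀ x, μ {x} ≠ 0) :
    fEntropy f lam μ = fEntropySum f lam fun x => (μ {x}).toReal := by
  refine tsum_congr fun g => ?_
  simp only [fEntropyTerm, ENNReal.tsum_mul_left]
  congr 1
  rw [fDivE, map_inv_smul_eq_withDensity hμ (fun x => measure_ne_top μ {x}) g,
    lintegral_congr_ae ((Measure.rnDeriv_withDensity μ (measurable_of_countable _)).mono
      fun x hx => by rw [hx]), lintegral_countable']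
  refine tsum_congr fun x => ?_
  rw [ENNReal.ofReal_mul ENNReal.toReal_nonneg, ENNReal.ofReal_toReal (measure_ne_top μ _),
    ENNReal.toReal_div, mul_comm (μ {x})]

theorem div_eq_div_mul_right_of_isMinimizer {f : ℝ → ℝ} (hf : StrictConvexOn ℝ (Set.Ioi 0) f)
    (hf0 : ∀ x ∈ Set.Ioi (0 : ℝ), 0 ≤ f x) {lam : G → ℝ} {κ : Measure G} [IsProbabilityMeasure κ]
    (hκ : ∀ x, κ {x} ≠ 0) (hfin : fEntropy f lam κ ≠ ⊤)
    (hmin : ∀ ν : Measure G, IsProbabilityMeasure ν → (∀ x, ν {x} ≠ 0) →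
      fEntropy f lam κ ≤ fEntropy f lam ν)
    (h : G) {g : G} (hg : 0 < lam g) (x : G) :
    (κ {g * x}).toReal / (κ {x}).toReal = (κ {g * x * h}).toReal / (κ {x * h}).toReal := by
  set w : G → ℝ := fun x => (κ {x}).toReal
  let ν : Measure G := (2 : ℝ≥0∞)⁻¹ • (κ + κ.map (· * h⁻¹))
  have hνx (x : G) : ν {x} = 2⁻¹ * (κ {x} + κ {x * h}) := by
    simp [ν, Measure.map_apply (measurable_of_countable _) (measurableSet_singleton x), mul_add]
  have hν : IsProbabilityMeasure ν := ⟨by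
    simp [ν, Measure.map_apply (measurable_of_countable _) MeasurableSet.univ,
      ENNReal.inv_two_add_inv_two]⟩
  have hνw : (fun x => (ν {x}).toReal) = (2 : ℝ)⁻¹ • (w + fun x => w (x * h)) := by
    ext x
    simp [hνx, w, ENNReal.toReal_add]
  have hνsupp (x : G) : ν {x} ≠ 0 := by simp [hνx, hκ]
  have hle := hmin ν hν hνsupp
  rw [fEntropy_eq_fEntropySum f lam κ hκ, fEntropy_eq_fEntropySum f lam ν hνsupp, hνw] at hle
  rw [fEntropy_eq_fEntropySum f lam κ hκ] at hfin
  exact div_eq_div_mul_right_of_le_fEntropySum_midpoint hf hf0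
    (fun x => ENNReal.toReal_pos (hκ x) (measure_ne_top κ _)) hfin hle hg x

end Measures

section Invariance

variable {G : Type*} [Group G]

theorem apply_mul_left_eq_of_div_const {w : G → ℝ} (hw : ∀ x, w x ≠ 0) (hsum : ∑' x, w x ≠ 0)
    {g : G} (hratio : ∀ x, w (g * x) / w x = w g / w 1) (x : G) : w (g * x) = w x := by
  have hmul (y : G) : w (g * y) = w g / w 1 * w y := by rw [← hratio y, div_mul_cancel₀ _ (hw y)]
  have hc : w g / w 1 = 1 := by
    have := (Equiv.mulLeft g).tsum_eq w
    simp only [Equiv.coe_mulLeft, hmul, tsum_mul_left] at this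
    exact (mul_eq_right₀ hsum).1 this
  rw [hmul, hc, one_mul]

theorem apply_eq_apply_one_of_closure_eq_top {α : Type*} {S : Set G}
    (hS : Subgroup.closure S = ⊤) {w : G → α} (hw : ∀ g ∈ S, ∀ x, w (g * x) = w x) (x : G) :
    w x = w 1 := by
  have hinv (g : G) : ∀ y, w (g * y) = w y := by
    induction hS ▸ Subgroup.mem_top g using Subgroup.closure_induction with
    | mem g hg => exact hw g hg
    | one => simp
    | mul a b _ _ ha hb => intro y; rw [mul_assoc, ha, hb]
    | inv a _ ha => intro y; rw [← ha, mul_inv_cancel_left]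
  simpa using hinv x 1

end Invariance

theorem tsum_measure_singleton {α : Type*} [MeasurableSpace α] [Countable α]
    [MeasurableSingletonClass α] (μ : Measure α) : ∑' x, μ {x} = μ Set.univ := by
  simpa using μ.tsum_indicator_apply_singleton Set.univ MeasurableSet.univ

theorem finite_and_measure_singleton_eq_inv_card {α : Type*} [MeasurableSpace α] [Countable α]
    [MeasurableSingletonClass α] (μ : Measure α) [IsProbabilityMeasure μ] {a : α}
    (hμ : ∀ x, μ {x} = μ {a}) : Finite α ∧ ∀ x, μ {x} = (Nat.card α : ℝ≥0∞)⁻¹ := by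
  have htot : ∑' _ : α, μ {a} = 1 := by
    rw [← measure_univ (μ := μ), ← tsum_measure_singleton, tsum_congr hμ]
  have ha : μ {a} ≠ 0 := by
    rintro ha
    simp [ha] at htot
  have hfinite : Finite α := by
    by_contra hinf
    have : Infinite α := not_finite_iff_infinite.1 hinf
    simp [ENNReal.tsum_const_eq_top_of_ne_zero ha] at htot
  refine ⟨hfinite, fun x => ?_⟩
  have := Fintype.ofFinite α
  rw [tsum_fintype, Finset.sum_const, Finset.card_univ, nsmul_eq_mul,
    ← Nat.card_eq_fintype_card, mul_comm] at htot
  rw [hμ, ENNReal.eq_inv_of_mul_eq_one_left htot]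

theorem finite_of_entropy_minimizer_general {G : Type*} [Group G] [Countable G]
    [MeasurableSpace G] [MeasurableSingletonClass G]
    (f : ℝ → ℝ) (hf : StrictConvexOn ℝ (Set.Ioi (0:ℝ)) f)
    (hfpos : ∀ x ∈ Set.Ioi (0:ℝ), 0 ≤ f x)
    (lam : G → ℝ) (hlam0 : ∀ g, 0 ≤ lam g)
    (hgen : Subgroup.closure {g : G | lam g ≠ 0} = ⊤)
    (κ : Measure G) [IsProbabilityMeasure κ] (hsupp : ∀ g : G, κ {g} ≠ 0)
    (hfin : fEntropy f lam κ ≠ ⊤)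
    (hmin : fEntropy f lam κ =
      ⨅ κ' : {κ' : Measure G // IsProbabilityMeasure κ' ∧ ∀ g : G, κ' {g} ≠ 0},
        fEntropy f lam (κ' : Measure G)) :
    Finite G ∧ ∀ g : G, κ {g} = ((Nat.card G : ENNReal))⁻¹ := by
  have hmin' (ν : Measure G) (hν : IsProbabilityMeasure ν) (hνx : ∀ x, ν {x} ≠ 0) :
      fEntropy f lam κ ≤ fEntropy f lam ν :=
    hmin ▸ iInf_le_of_le ⟨ν, hν, hνx⟩ le_rfl
  set w : G → ℝ := fun x => (κ {x}).toReal
  have hsum : ∑' x, w x = 1 := by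
    rw [← ENNReal.tsum_toReal_eq fun x => measure_ne_top κ _, tsum_measure_singleton,
      measure_univ, ENNReal.toReal_one]
  have hinv (g : G) (hg : g ∈ {g : G | lam g ≠ 0}) (x : G) : w (g * x) = w x := by
    refine apply_mul_left_eq_of_div_const
      (fun x => (ENNReal.toReal_pos (hsupp x) (measure_ne_top κ _)).ne') (hsum ▸ one_ne_zero)
      (fun y => ?_) x
    simpa using (div_eq_div_mul_right_of_isMinimizer hf hfpos hsupp hfin hmin' y
      ((hlam0 g).lt_of_ne' hg) 1).symm
  refine finite_and_measure_singleton_eq_inv_card κ (a := 1) fun x => ?_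
  exact (ENNReal.toReal_eq_toReal_iff' (measure_ne_top κ _) (measure_ne_top κ _)).1
    (apply_eq_apply_one_of_closure_eq_top hgen hinv x)

/-- If a fully supported probability measure `κ` on a countable group `G`
attains the infimum `I_{λ,f}(G) < ∞` (for `f` strictly convex with `f 1 = 0`
and `λ` generating), then `G` is finite and `κ` is the uniform measure. -/
theorem finite_of_entropy_minimizer {G : Type*} [Group G] [Countable G]
    [MeasurableSpace G] [MeasurableSingletonClass G]
    (f : ℝ → ℝ) (hf : StrictConvexOn ℝ (Set.Ioi (0:ℝ)) f) (hf1 : f 1 = 0)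
    (hfpos : ∀ x ∈ Set.Ioi (0:ℝ), 0 ≤ f x)
    (lam : G → ℝ) (hlam0 : ∀ g, 0 ≤ lam g) (hlam1 : ∑' g, lam g = 1)
    (hgen : Subgroup.closure {g : G | lam g ≠ 0} = ⊤)
    (κ : Measure G) [IsProbabilityMeasure κ] (hsupp : ∀ g : G, κ {g} ≠ 0)
    (hfin : fEntropy f lam κ ≠ ⊤)
    (hmin : fEntropy f lam κ =
      ⨅ κ' : {κ' : Measure G // IsProbabilityMeasure κ' ∧ ∀ g : G, κ' {g} ≠ 0},
        fEntropy f lam (κ' : Measure G)) :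
    Finite G ∧ ∀ g : G, κ {g} = ((Nat.card G : ENNReal))⁻¹ :=
  finite_of_entropy_minimizer_general f hf hfpos lam hlam0 hgen κ hsupp hfin hmin
end

section
/- Let (X,ν) be a G-space where ν is quasi-invariant with bounded Radon–Nikodym derivatives, f smooth convex on (0,∞), and F(x,y)=y·f(x/y). Then for any probability measure m in the bounded measure class of ν and any g ∈ G: D_f(gm‖m) ≥ D_f(gν‖ν) + ∫_X [∂F/∂x(1, dg⁻¹ν/dν) + ∂F/∂y(dgν/dν, 1)] d(m−ν). -/
open MeasureTheory

lemma tangent_line {f : ℝ → ℝ} (hf : ConvexOn ℝ (Set.Ioi (0:ℝ)) f)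
    {a u : ℝ} (ha : a ∈ Set.Ioi (0:ℝ)) (hu : u ∈ Set.Ioi (0:ℝ))
    (hd : DifferentiableAt ℝ f a) :
    f a + deriv f a * (u - a) ≤ f u := by
  rcases lt_trichotomy a u with h | h | h
  · have h1 := hf.deriv_le_slope ha hu h hd
    rw [slope_def_field, le_div_iff₀ (sub_pos.mpr h)] at h1
    linarith
  · simp [h]
  · have h1 := hf.slope_le_deriv hu ha h hd
    rw [slope_def_field, div_le_iff₀ (sub_pos.mpr h)] at h1
    nlinarith

lemma integrable_of_abs_bound {X : Type*} [MeasurableSpace X] {μ : Measure X}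
    [IsFiniteMeasure μ] {h : X → ℝ} {M : ℝ} (hm : AEStronglyMeasurable h μ)
    (hb : ∀ᵐ x ∂μ, |h x| ≤ M) : Integrable h μ :=
  Integrable.mono' (integrable_const M) hm (by simpa [Real.norm_eq_abs] using hb)

lemma rnDeriv_map_smul_apply {G X : Type*} [Group G] [MeasurableSpace G] [MeasurableSpace X]
    [MulAction G X] [MeasurableSMul G X] (μ ν : Measure X) [SigmaFinite μ] [SigmaFinite ν]
    (g : G) :
    (fun x => (μ.map (fun y => g • y)).rnDeriv (ν.map (fun y => g • y)) (g • x))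
      =ᵐ[ν] μ.rnDeriv ν := by
  have h := (MeasurableEquiv.smul (α := X) g).measurableEmbedding.rnDeriv_map μ ν
  convert h using 2
  all_goals rfl

lemma map_smul_map_smul_inv {G X : Type*} [Group G] [MeasurableSpace G] [MeasurableSpace X]
    [MulAction G X] [MeasurableSMul G X] (ν : Measure X) (g : G) :
    (ν.map (fun y => g⁻¹ • y)).map (fun y => g • y) = ν := by
  rw [Measure.map_map (measurable_const_smul g) (measurable_const_smul g⁻¹)]
  simp [Function.comp_def]

lemma ae_map_smul_iff {G X : Type*} [Group G] [MeasurableSpace G] [MeasurableSpace X]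
    [MulAction G X] [MeasurableSMul G X] (g : G) (μ : Measure X) {p : X → Prop} :
    (∀ᵐ y ∂μ.map (fun x => g • x), p y) ↔ ∀ᵐ x ∂μ, p (g • x) := by
  have h := (MeasurableEquiv.smul (α := X) g).measurableEmbedding.ae_map_iff (μ := μ) (p := p)
  convert h using 2
  all_goals rfl

/-- For a BQI measure `ν` on a `G`-space `X`, a smooth convex `f` on `(0,∞)` with
perspective `F(x,y) = y·f(x/y)` (so `∂F/∂x(x,y) = f'(x/y)` and
`∂F/∂y(x,y) = f(x/y) − (x/y)·f'(x/y)`), any probability measure `m` in the bounded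
measure class of `ν` and any `g ∈ G` satisfy
`D_f(gm‖m) ≥ D_f(gν‖ν) + ∫ [∂F/∂x(1, dg⁻¹ν/dν) + ∂F/∂y(dgν/dν, 1)] d(m−ν)`. -/
theorem fDiv_ge_linearization {G X : Type*} [Group G]
    [MeasurableSpace G] [MeasurableSingletonClass G]
    [MeasurableSpace X] [MulAction G X] [MeasurableSMul G X]
    (f : ℝ → ℝ) (hf : ConvexOn ℝ (Set.Ioi (0:ℝ)) f)
    (hsmooth : ContDiffOn ℝ (⊤ : ℕ∞) f (Set.Ioi (0:ℝ)))
    (ν : Measure X) [IsProbabilityMeasure ν]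
    (hqi : ∀ g : G, ν.map (fun x => g • x) ≪ ν ∧ ν ≪ ν.map (fun x => g • x))
    (hbdd : ∀ g : G, ∃ C : ENNReal, C ≠ ⊤ ∧
      ∀ᵐ x ∂ν, (ν.map (fun x => g • x)).rnDeriv ν x ≤ C)
    (m : Measure X) [IsProbabilityMeasure m] (hmν : m ≪ ν) (hνm : ν ≪ m)
    (hmbdd : ∃ C : ENNReal, C ≠ ⊤ ∧
      (∀ᵐ x ∂ν, m.rnDeriv ν x ≤ C) ∧ (∀ᵐ x ∂ν, ν.rnDeriv m x ≤ C))
    (g : G) :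
    ∫ x, f (((m.map (fun x => g • x)).rnDeriv m x).toReal) ∂m
      ≥ (∫ x, f (((ν.map (fun x => g • x)).rnDeriv ν x).toReal) ∂ν)
        + ((∫ x, (deriv f
              (1 / (((ν.map (fun x => g⁻¹ • x)).rnDeriv ν x).toReal))
            + (f (((ν.map (fun x => g • x)).rnDeriv ν x).toReal)
              - (((ν.map (fun x => g • x)).rnDeriv ν x).toReal)
                * deriv f (((ν.map (fun x => g • x)).rnDeriv ν x).toReal))) ∂m)
          - (∫ x, (deriv f
              (1 / (((ν.map (fun x => g⁻¹ • x)).rnDeriv ν x).toReal))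
            + (f (((ν.map (fun x => g • x)).rnDeriv ν x).toReal)
              - (((ν.map (fun x => g • x)).rnDeriv ν x).toReal)
                * deriv f (((ν.map (fun x => g • x)).rnDeriv ν x).toReal))) ∂ν)) := by
  -- measurability of the action
  have hgmeas : Measurable (fun x : X => g • x) := measurable_const_smul g
  have hg'meas : Measurable (fun x : X => g⁻¹ • x) := measurable_const_smul g⁻¹
  -- measures
  set gν := ν.map (fun x : X => g • x) with hgν_def
  set g'ν := ν.map (fun x : X => g⁻¹ • x) with hg'ν_def
  set gm := m.map (fun x : X => g • x) with hgm_def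
  haveI : IsProbabilityMeasure gν := Measure.isProbabilityMeasure_map hgmeas.aemeasurable
  haveI : IsProbabilityMeasure g'ν := Measure.isProbabilityMeasure_map hg'meas.aemeasurable
  haveI : IsProbabilityMeasure gm := Measure.isProbabilityMeasure_map hgmeas.aemeasurable
  -- absolute continuity
  have hgνν : gν ≪ ν := (hqi g).1
  have hνgν : ν ≪ gν := (hqi g).2
  have hg'νν : g'ν ≪ ν := (hqi g⁻¹).1
  have hνg'ν : ν ≪ g'ν := (hqi g⁻¹).2
  have hgmgν : gm ≪ gν := hmν.map hgmeas
  have hgνgm : gν ≪ gm := hνm.map hgmeas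
  have hgmν : gm ≪ ν := hgmgν.trans hgνν
  have hgmm : gm ≪ m := hgmν.trans hνm
  -- densities (ENNReal valued)
  set A := gν.rnDeriv ν with hA_def
  set B := g'ν.rnDeriv ν with hB_def
  set P := m.rnDeriv ν with hP_def
  set Q := gm.rnDeriv ν with hQ_def
  set R := gm.rnDeriv m with hR_def
  -- constants
  obtain ⟨C₁, hC₁top, hC₁⟩ := hbdd g
  obtain ⟨C₂, hC₂top, hC₂⟩ := hbdd g⁻¹
  obtain ⟨C₃, hC₃top, hC₃, hC₃'⟩ := hmbdd
  set K : ENNReal := max C₁ (max C₂ (max C₃ 1)) with hK_def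
  have hKtop : K ≠ ⊤ := by
    simp only [hK_def, ne_eq, max_eq_top, not_or]
    exact ⟨hC₁top, hC₂top, hC₃top, by simp⟩
  have hK1 : (1:ENNReal) ≤ K := le_max_of_le_right (le_max_of_le_right (le_max_right _ _))
  have hK0 : K ≠ 0 := fun h => by simp [h] at hK1
  have hKinv_top : K⁻¹ ≠ ⊤ := by simp [hK0]
  -- upper bounds (ENNReal) a.e. ν
  have hAK : ∀ᵐ x ∂ν, A x ≤ K := hC₁.mono fun x hx => hx.trans (le_max_left _ _)
  have hBK : ∀ᵐ x ∂ν, B x ≤ K :=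
    hC₂.mono fun x hx => hx.trans (le_max_of_le_right (le_max_left _ _))
  have hPK : ∀ᵐ x ∂ν, P x ≤ K :=
    hC₃.mono fun x hx => hx.trans (le_max_of_le_right (le_max_of_le_right (le_max_left _ _)))
  have hP'K : ∀ᵐ x ∂ν, ν.rnDeriv m x ≤ K :=
    hC₃'.mono fun x hx => hx.trans (le_max_of_le_right (le_max_of_le_right (le_max_left _ _)))
  -- lower bound for P
  have hPk : ∀ᵐ x ∂ν, K⁻¹ ≤ P x := by
    have h := hνm.ae_le (Measure.inv_rnDeriv hmν)
    filter_upwards [h, hP'K] with x hx hx'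
    rw [← hx] at hx'
    simpa using ENNReal.inv_le_inv.mpr hx'
  -- the composition identities
  have hABinv : ∀ᵐ x ∂ν, A (g • x) = (B x)⁻¹ := by
    have key := rnDeriv_map_smul_apply ν g'ν g
    rw [hg'ν_def, map_smul_map_smul_inv] at key
    have key2 := hνg'ν.ae_le key
    have hinv := hνg'ν.ae_le (Measure.inv_rnDeriv hg'νν)
    filter_upwards [key2, hinv] with x h1 h2
    rw [← hB_def] at h2
    exact h1.trans h2.symm
  have hBAinv : ∀ᵐ x ∂ν, B (g⁻¹ • x) = (A x)⁻¹ := by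
    have key := rnDeriv_map_smul_apply ν gν g⁻¹
    have heq : gν.map (fun y => g⁻¹ • y) = ν := by
      rw [hgν_def]; simpa using map_smul_map_smul_inv ν g⁻¹
    rw [heq] at key
    have key2 := hνgν.ae_le key
    have hinv := hνgν.ae_le (Measure.inv_rnDeriv hgνν)
    filter_upwards [key2, hinv] with x h1 h2
    rw [← hA_def] at h2
    exact h1.trans h2.symm
  -- lower bounds for A and B
  have hAk : ∀ᵐ x ∂ν, K⁻¹ ≤ A x := by
    have h1 : ∀ᵐ x ∂ν, K⁻¹ ≤ A (g • x) := by
      filter_upwards [hABinv, hBK] with x h1 h2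
      rw [h1]
      exact ENNReal.inv_le_inv.mpr h2
    have h2 : ∀ᵐ y ∂gν, K⁻¹ ≤ A y := by
      rw [hgν_def, ae_map_smul_iff]
      exact h1
    exact hνgν.ae_le h2
  have hBk : ∀ᵐ x ∂ν, K⁻¹ ≤ B x := by
    have h1 : ∀ᵐ x ∂ν, K⁻¹ ≤ B (g⁻¹ • x) := by
      filter_upwards [hBAinv, hAK] with x h1 h2
      rw [h1]
      exact ENNReal.inv_le_inv.mpr h2
    have h2 : ∀ᵐ y ∂g'ν, K⁻¹ ≤ B y := by
      rw [hg'ν_def, ae_map_smul_iff]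
      exact h1
    exact hνg'ν.ae_le h2
  -- bounds for gm.rnDeriv gν
  set W := gm.rnDeriv gν with hW_def
  have hWb : ∀ᵐ y ∂ν, W y ≤ K ∧ K⁻¹ ≤ W y := by
    have hWdef : (fun x => W (g • x)) =ᵐ[ν] P := by
      rw [hW_def, hgm_def, hgν_def, hP_def]
      exact rnDeriv_map_smul_apply m ν g
    have h1 : ∀ᵐ x ∂ν, W (g • x) ≤ K ∧ K⁻¹ ≤ W (g • x) := by
      filter_upwards [hWdef, hPK, hPk] with x h1 h2 h3
      rw [h1]; exact ⟨h2, h3⟩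
    have h2 : ∀ᵐ y ∂gν, W y ≤ K ∧ K⁻¹ ≤ W y := by
      rw [hgν_def, ae_map_smul_iff]; exact h1
    exact hνgν.ae_le h2
  have hQmul : Q =ᵐ[ν] W * A := (Measure.rnDeriv_mul_rnDeriv hgmgν).symm
  have hQb : ∀ᵐ x ∂ν, Q x ≤ K * K ∧ K⁻¹ * K⁻¹ ≤ Q x := by
    filter_upwards [hQmul, hWb, hAK, hAk] with x h1 h2 h3 h4
    rw [h1]
    exact ⟨mul_le_mul' h2.1 h3, mul_le_mul' h2.2 h4⟩
  -- bounds for ν.rnDeriv m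
  have hP'k : ∀ᵐ x ∂ν, K⁻¹ ≤ ν.rnDeriv m x := by
    filter_upwards [Measure.inv_rnDeriv hνm, hPK] with x h1 h2
    rw [← hP_def] at h1
    have h3 : (ν.rnDeriv m x)⁻¹ ≤ K := by
      show (ν.rnDeriv m)⁻¹ x ≤ K
      rw [h1]; exact h2
    calc K⁻¹ ≤ ((ν.rnDeriv m x)⁻¹)⁻¹ := ENNReal.inv_le_inv.mpr h3
      _ = ν.rnDeriv m x := inv_inv _
  -- bounds for R
  have hRmul : R =ᵐ[ν] Q * ν.rnDeriv m :=
    hνm.ae_le (Measure.rnDeriv_mul_rnDeriv hgmν).symm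
  have hRb : ∀ᵐ x ∂ν, R x ≤ K * (K * K) ∧ K⁻¹ * (K⁻¹ * K⁻¹) ≤ R x := by
    filter_upwards [hRmul, hQb, hP'K, hP'k] with x h1 h2 h3 h4
    rw [h1]
    constructor
    · calc Q x * ν.rnDeriv m x ≤ (K * K) * K := mul_le_mul' h2.1 h3
        _ = K * (K * K) := by ring
    · calc K⁻¹ * (K⁻¹ * K⁻¹) = (K⁻¹ * K⁻¹) * K⁻¹ := by ring
        _ ≤ Q x * ν.rnDeriv m x := mul_le_mul' h2.2 h4
  have hRPQ : R * P =ᵐ[ν] Q := Measure.rnDeriv_mul_rnDeriv hgmm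
  -- real constants
  set t := (K⁻¹).toReal with ht_def
  set D := K.toReal with hD_def
  have hKinv0 : K⁻¹ ≠ 0 := ENNReal.inv_ne_zero.mpr hKtop
  have hKinv1 : K⁻¹ ≤ 1 := ENNReal.inv_le_one.mpr hK1
  have hD1 : (1:ℝ) ≤ D := by
    rw [hD_def]
    have := ENNReal.toReal_mono hKtop hK1
    simpa using this
  have ht0 : 0 < t := ENNReal.toReal_pos hKinv0 hKinv_top
  have ht1 : t ≤ 1 := by
    rw [ht_def]
    have := ENNReal.toReal_mono (by simp) hKinv1
    simpa using this
  set c := t * (t * t) with hc_def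
  set Cb := D * (D * D) with hCb_def
  have hc0 : 0 < c := by positivity
  have hc1 : c ≤ 1 := by rw [hc_def]; nlinarith
  have hCb1 : (1:ℝ) ≤ Cb := by rw [hCb_def]; nlinarith
  have hcCb : c ≤ Cb := hc1.trans hCb1
  have hKcube_ne_top : K * (K * K) ≠ ⊤ := by finiteness
  -- conversion to real Icc membership
  have key_mem : ∀ Z : ENNReal, K⁻¹ * (K⁻¹ * K⁻¹) ≤ Z → Z ≤ K * (K * K) →
      Z.toReal ∈ Set.Icc c Cb := by
    intro Z h1 h2
    have hfin : Z ≠ ⊤ := ne_top_of_le_ne_top hKcube_ne_top h2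
    constructor
    · have h3 := ENNReal.toReal_mono hfin h1
      rw [ENNReal.toReal_mul, ENNReal.toReal_mul] at h3
      exact h3
    · have h3 := ENNReal.toReal_mono hKcube_ne_top h2
      rw [ENNReal.toReal_mul, ENNReal.toReal_mul] at h3
      exact h3
  have low1 : K⁻¹ * (K⁻¹ * K⁻¹) ≤ K⁻¹ := by
    calc K⁻¹ * (K⁻¹ * K⁻¹) ≤ 1 * (1 * K⁻¹) :=
      mul_le_mul' hKinv1 (mul_le_mul' hKinv1 le_rfl)
    _ = K⁻¹ := by rw [one_mul, one_mul]
  have low2 : K⁻¹ * (K⁻¹ * K⁻¹) ≤ K⁻¹ * K⁻¹ := by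
    calc K⁻¹ * (K⁻¹ * K⁻¹) = K⁻¹ * K⁻¹ * K⁻¹ := by ring
    _ ≤ K⁻¹ * K⁻¹ * 1 := mul_le_mul' le_rfl hKinv1
    _ = K⁻¹ * K⁻¹ := by rw [mul_one]
  have up1 : K ≤ K * (K * K) := by
    calc K = 1 * (1 * K) := by rw [one_mul, one_mul]
    _ ≤ K * (K * K) := mul_le_mul' hK1 (mul_le_mul' hK1 le_rfl)
  have up2 : K * K ≤ K * (K * K) := by
    calc K * K = K * K * 1 := by rw [mul_one]
    _ ≤ K * K * K := mul_le_mul' le_rfl hK1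
    _ = K * (K * K) := by ring
  have expand1 : ∀ Z : ENNReal, K⁻¹ ≤ Z → Z ≤ K → Z.toReal ∈ Set.Icc c Cb :=
    fun Z h1 h2 => key_mem Z (low1.trans h1) (h2.trans up1)
  -- a.e. real memberships
  have hmema : ∀ᵐ x ∂ν, (A x).toReal ∈ Set.Icc c Cb := by
    filter_upwards [hAk, hAK] with x h1 h2 using expand1 _ h1 h2
  have hmemb : ∀ᵐ x ∂ν, (B x).toReal ∈ Set.Icc c Cb := by
    filter_upwards [hBk, hBK] with x h1 h2 using expand1 _ h1 h2
  have hmemp : ∀ᵐ x ∂ν, (P x).toReal ∈ Set.Icc c Cb := by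
    filter_upwards [hPk, hPK] with x h1 h2 using expand1 _ h1 h2
  have hmemq : ∀ᵐ x ∂ν, (Q x).toReal ∈ Set.Icc c Cb := by
    filter_upwards [hQb] with x h1
    exact key_mem _ (low2.trans h1.2) (h1.1.trans up2)
  have hmemr : ∀ᵐ x ∂ν, (R x).toReal ∈ Set.Icc c Cb := by
    filter_upwards [hRb] with x h1 using key_mem _ h1.2 h1.1
  -- real identities
  have hqrp : ∀ᵐ x ∂ν, (Q x).toReal = (R x).toReal * (P x).toReal := by
    filter_upwards [hRPQ] with x h1
    rw [← h1, Pi.mul_apply, ENNReal.toReal_mul]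
  have habν : ∀ᵐ x ∂ν, (A (g • x)).toReal = 1 / (B x).toReal := by
    filter_upwards [hABinv] with x h1
    rw [h1, ENNReal.toReal_inv, one_div]
  have habm : ∀ᵐ x ∂m, (A (g • x)).toReal = 1 / (B x).toReal := hmν.ae_le habν
  -- analytic setup
  have hIcc : Set.Icc c Cb ⊆ Set.Ioi (0:ℝ) := fun y hy => lt_of_lt_of_le hc0 hy.1
  obtain ⟨Mf, hMf⟩ := (isCompact_Icc (a := c) (b := Cb)).exists_bound_of_continuousOn
    (hsmooth.continuousOn.mono hIcc)
  obtain ⟨Mφ, hMφ⟩ := (isCompact_Icc (a := c) (b := Cb)).exists_bound_of_continuousOn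
    ((hsmooth.continuousOn_deriv_of_isOpen isOpen_Ioi (by simp)).mono hIcc)
  have hMφ0 : 0 ≤ Mφ := le_trans (abs_nonneg _) (by simpa using hMφ c ⟨le_rfl, hcCb⟩)
  have hMf0 : 0 ≤ Mf := le_trans (abs_nonneg _) (by simpa using hMf c ⟨le_rfl, hcCb⟩)
  have hdiffat : ∀ u : ℝ, u ∈ Set.Ioi (0:ℝ) → DifferentiableAt ℝ f u := fun u hu =>
    (hsmooth.contDiffAt (isOpen_Ioi.mem_nhds hu)).differentiableAt (by simp)
  -- the inverse map preserves Icc c Cb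
  have htD : t = D⁻¹ := by rw [ht_def, hD_def, ENNReal.toReal_inv]
  have hD0 : (0:ℝ) < D := lt_of_lt_of_le zero_lt_one hD1
  have hcCb1 : c * Cb = 1 := by
    rw [hc_def, hCb_def, htD]; field_simp
  have h1c : 1 / c = Cb :=
    (eq_one_div_of_mul_eq_one_left (by rw [mul_comm]; exact hcCb1)).symm
  have h1Cb : 1 / Cb = c := (eq_one_div_of_mul_eq_one_left hcCb1).symm
  have hinv_mem : ∀ u, u ∈ Set.Icc c Cb → 1 / u ∈ Set.Icc c Cb := by
    intro u hu
    have hu0 : 0 < u := hIcc hu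
    exact ⟨by rw [← h1Cb]; exact one_div_le_one_div_of_le hu0 hu.2,
      by rw [← h1c]; exact one_div_le_one_div_of_le hc0 hu.1⟩
  -- clamped version of f
  set clamp : ℝ → ℝ := fun u => max c (min u Cb) with hclamp_def
  have hclamp_cont : Continuous clamp := continuous_const.max (continuous_id.min continuous_const)
  have hclamp_mem : ∀ u, clamp u ∈ Set.Icc c Cb := fun u =>
    ⟨le_max_left _ _, max_le hcCb (min_le_right _ _)⟩
  have hclamp_id : ∀ u ∈ Set.Icc c Cb, clamp u = u := fun u hu => by
    rw [hclamp_def]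
    simp only
    rw [min_eq_left hu.2, max_eq_right hu.1]
  set fc : ℝ → ℝ := fun u => f (clamp u) with hfc_def
  have hfc_cont : Continuous fc :=
    hsmooth.continuousOn.comp_continuous hclamp_cont (fun u => hIcc (hclamp_mem u))
  have hfc_eq : ∀ u ∈ Set.Icc c Cb, fc u = f u := fun u hu => by
    rw [hfc_def]; simp only; rw [hclamp_id u hu]
  have hfc_bd : ∀ u, |fc u| ≤ Mf := fun u => by
    simpa using hMf _ (hclamp_mem u)
  have hφ_bd : ∀ u ∈ Set.Icc c Cb, |deriv f u| ≤ Mφ := fun u hu => by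
    simpa using hMφ u hu
  -- measurability
  have hmesa : Measurable fun x => (A x).toReal :=
    (Measure.measurable_rnDeriv _ _).ennreal_toReal
  have hmesb : Measurable fun x => (B x).toReal :=
    (Measure.measurable_rnDeriv _ _).ennreal_toReal
  have hmesp : Measurable fun x => (P x).toReal :=
    (Measure.measurable_rnDeriv _ _).ennreal_toReal
  have hmesq : Measurable fun x => (Q x).toReal :=
    (Measure.measurable_rnDeriv _ _).ennreal_toReal
  have hmesr : Measurable fun x => (R x).toReal :=
    (Measure.measurable_rnDeriv _ _).ennreal_toReal
  have hmesφ : Measurable (deriv f) := measurable_deriv f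
  have hCb0 : (0:ℝ) ≤ Cb := le_trans hc0.le hcCb
  have habs : ∀ u : ℝ, u ∈ Set.Icc c Cb → |u| ≤ Cb := fun u hu =>
    abs_le.mpr ⟨by linarith [hu.1, hc0, hCb0], hu.2⟩
  -- m-versions of the a.e. facts
  have hmemam : ∀ᵐ x ∂m, (A x).toReal ∈ Set.Icc c Cb := hmν.ae_le hmema
  have hmembm : ∀ᵐ x ∂m, (B x).toReal ∈ Set.Icc c Cb := hmν.ae_le hmemb
  have hmemrm : ∀ᵐ x ∂m, (R x).toReal ∈ Set.Icc c Cb := hmν.ae_le hmemr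
  -- integrability
  have int_fca : Integrable (fun x => fc ((A x).toReal)) ν :=
    integrable_of_abs_bound (hfc_cont.measurable.comp hmesa).aestronglyMeasurable
      (Filter.Eventually.of_forall fun x => hfc_bd _)
  have int_qφ : Integrable (fun x => (Q x).toReal * deriv f ((A x).toReal)) ν := by
    refine integrable_of_abs_bound (hmesq.mul (hmesφ.comp hmesa)).aestronglyMeasurable
      (M := Cb * Mφ) ?_
    filter_upwards [hmemq, hmema] with x h1 h2
    rw [abs_mul]
    exact mul_le_mul (habs _ h1) (hφ_bd _ h2) (abs_nonneg _) hCb0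
  have int_aφ : Integrable (fun x => (A x).toReal * deriv f ((A x).toReal)) ν := by
    refine integrable_of_abs_bound (hmesa.mul (hmesφ.comp hmesa)).aestronglyMeasurable
      (M := Cb * Mφ) ?_
    filter_upwards [hmema] with x h1
    rw [abs_mul]
    exact mul_le_mul (habs _ h1) (hφ_bd _ h1) (abs_nonneg _) hCb0
  have int_t3ν : Integrable
      (fun x => fc ((A x).toReal) - (A x).toReal * deriv f ((A x).toReal)) ν :=
    int_fca.sub int_aφ
  have int_pt3 : Integrable (fun x => (P x).toReal *
      (fc ((A x).toReal) - (A x).toReal * deriv f ((A x).toReal))) ν := by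
    refine integrable_of_abs_bound
      ((hmesp.mul ((hfc_cont.measurable.comp hmesa).sub
        (hmesa.mul (hmesφ.comp hmesa)))).aestronglyMeasurable)
      (M := Cb * (Mf + Cb * Mφ)) ?_
    filter_upwards [hmemp, hmema] with x h1 h2
    rw [abs_mul]
    refine mul_le_mul (habs _ h1) ?_ (abs_nonneg _) hCb0
    calc |fc ((A x).toReal) - (A x).toReal * deriv f ((A x).toReal)|
        ≤ |fc ((A x).toReal)| + |(A x).toReal * deriv f ((A x).toReal)| := abs_sub _ _
      _ ≤ Mf + Cb * Mφ := by
          refine add_le_add (hfc_bd _) ?_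
          rw [abs_mul]
          exact mul_le_mul (habs _ h2) (hφ_bd _ h2) (abs_nonneg _) hCb0
  have int_pfr : Integrable (fun x => (P x).toReal * fc ((R x).toReal)) ν := by
    refine integrable_of_abs_bound
      ((hmesp.mul (hfc_cont.measurable.comp hmesr)).aestronglyMeasurable)
      (M := Cb * Mf) ?_
    filter_upwards [hmemp] with x h1
    rw [abs_mul]
    exact mul_le_mul (habs _ h1) (hfc_bd _) (abs_nonneg _) hCb0
  have int_J1ν : Integrable (fun x => deriv f (1 / (B x).toReal)) ν := by
    refine integrable_of_abs_bound
      ((hmesφ.comp (hmesb.const_div 1)).aestronglyMeasurable) (M := Mφ) ?_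
    filter_upwards [hmemb] with x h1
    exact hφ_bd _ (hinv_mem _ h1)
  have int_J1m : Integrable (fun x => deriv f (1 / (B x).toReal)) m := by
    refine integrable_of_abs_bound
      ((hmesφ.comp (hmesb.const_div 1)).aestronglyMeasurable) (M := Mφ) ?_
    filter_upwards [hmembm] with x h1
    exact hφ_bd _ (hinv_mem _ h1)
  have int_t3m : Integrable
      (fun x => fc ((A x).toReal) - (A x).toReal * deriv f ((A x).toReal)) m := by
    refine integrable_of_abs_bound
      (((hfc_cont.measurable.comp hmesa).sub
        (hmesa.mul (hmesφ.comp hmesa))).aestronglyMeasurable)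
      (M := Mf + Cb * Mφ) ?_
    filter_upwards [hmemam] with x h2
    calc |fc ((A x).toReal) - (A x).toReal * deriv f ((A x).toReal)|
        ≤ |fc ((A x).toReal)| + |(A x).toReal * deriv f ((A x).toReal)| := abs_sub _ _
      _ ≤ Mf + Cb * Mφ := by
          refine add_le_add (hfc_bd _) ?_
          rw [abs_mul]
          exact mul_le_mul (habs _ h2) (hφ_bd _ h2) (abs_nonneg _) hCb0
  -- Step 1: rewrite LHS as an integral over ν
  have G1 : ∫ x, f ((R x).toReal) ∂m = ∫ x, (P x).toReal * fc ((R x).toReal) ∂ν := by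
    have e1 : ∫ x, f ((R x).toReal) ∂m = ∫ x, fc ((R x).toReal) ∂m :=
      integral_congr_ae (by filter_upwards [hmemrm] with x h1; rw [hfc_eq _ h1])
    rw [e1, ← integral_rnDeriv_smul hmν (f := fun x => fc ((R x).toReal))]
    simp only [smul_eq_mul]
    rfl
  have G2 : ∫ x, f ((A x).toReal) ∂ν = ∫ x, fc ((A x).toReal) ∂ν :=
    integral_congr_ae (by filter_upwards [hmema] with x h1; rw [hfc_eq _ h1])
  have G5 : ∫ x, (Q x).toReal * deriv f ((A x).toReal) ∂ν
      = ∫ x, deriv f (1 / (B x).toReal) ∂m := by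
    have e1 : ∫ x, (Q x).toReal * deriv f ((A x).toReal) ∂ν
        = ∫ y, deriv f ((A y).toReal) ∂gm := by
      rw [← integral_rnDeriv_smul hgmν (f := fun y => deriv f ((A y).toReal))]
      simp only [smul_eq_mul]
      rfl
    have e2 : ∫ y, deriv f ((A y).toReal) ∂gm = ∫ x, deriv f ((A (g • x)).toReal) ∂m := by
      rw [hgm_def]
      exact integral_map hgmeas.aemeasurable (hmesφ.comp hmesa).aestronglyMeasurable
    have e3 : ∫ x, deriv f ((A (g • x)).toReal) ∂m = ∫ x, deriv f (1 / (B x).toReal) ∂m :=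
      integral_congr_ae (by filter_upwards [habm] with x h1; rw [h1])
    rw [e1, e2, e3]
  have G6 : ∫ x, (A x).toReal * deriv f ((A x).toReal) ∂ν
      = ∫ x, deriv f (1 / (B x).toReal) ∂ν := by
    have e1 : ∫ x, (A x).toReal * deriv f ((A x).toReal) ∂ν
        = ∫ y, deriv f ((A y).toReal) ∂gν := by
      rw [← integral_rnDeriv_smul hgνν (f := fun y => deriv f ((A y).toReal))]
      simp only [smul_eq_mul]
      rfl
    have e2 : ∫ y, deriv f ((A y).toReal) ∂gν = ∫ x, deriv f ((A (g • x)).toReal) ∂ν := by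
      rw [hgν_def]
      exact integral_map hgmeas.aemeasurable (hmesφ.comp hmesa).aestronglyMeasurable
    have e3 : ∫ x, deriv f ((A (g • x)).toReal) ∂ν = ∫ x, deriv f (1 / (B x).toReal) ∂ν :=
      integral_congr_ae (by filter_upwards [habν] with x h1; rw [h1])
    rw [e1, e2, e3]
  have G7 : ∫ x, (P x).toReal * (fc ((A x).toReal)
        - (A x).toReal * deriv f ((A x).toReal)) ∂ν
      = ∫ x, (fc ((A x).toReal) - (A x).toReal * deriv f ((A x).toReal)) ∂m := by
    rw [← integral_rnDeriv_smul hmν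
      (f := fun x => fc ((A x).toReal) - (A x).toReal * deriv f ((A x).toReal))]
    simp only [smul_eq_mul]
    rfl
  have G3 : ∫ x, (deriv f (1 / (B x).toReal)
        + (f ((A x).toReal) - (A x).toReal * deriv f ((A x).toReal))) ∂m
      = ∫ x, deriv f (1 / (B x).toReal) ∂m
        + ∫ x, (fc ((A x).toReal) - (A x).toReal * deriv f ((A x).toReal)) ∂m := by
    have e0 : (fun x => deriv f (1 / (B x).toReal)
        + (f ((A x).toReal) - (A x).toReal * deriv f ((A x).toReal)))
        =ᵐ[m] fun x => deriv f (1 / (B x).toReal)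
          + (fc ((A x).toReal) - (A x).toReal * deriv f ((A x).toReal)) := by
      filter_upwards [hmemam] with x h1
      rw [hfc_eq _ h1]
    rw [integral_congr_ae e0, integral_add int_J1m int_t3m]
  have G4 : ∫ x, (deriv f (1 / (B x).toReal)
        + (f ((A x).toReal) - (A x).toReal * deriv f ((A x).toReal))) ∂ν
      = ∫ x, deriv f (1 / (B x).toReal) ∂ν
        + ∫ x, (fc ((A x).toReal) - (A x).toReal * deriv f ((A x).toReal)) ∂ν := by
    have e0 : (fun x => deriv f (1 / (B x).toReal)
        + (f ((A x).toReal) - (A x).toReal * deriv f ((A x).toReal)))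
        =ᵐ[ν] fun x => deriv f (1 / (B x).toReal)
          + (fc ((A x).toReal) - (A x).toReal * deriv f ((A x).toReal)) := by
      filter_upwards [hmema] with x h1
      rw [hfc_eq _ h1]
    rw [integral_congr_ae e0, integral_add int_J1ν int_t3ν]
  -- pointwise convexity inequality
  have G8 : ∀ᵐ x ∂ν, fc ((A x).toReal)
      + deriv f ((A x).toReal) * ((Q x).toReal - (A x).toReal)
      + (fc ((A x).toReal) - (A x).toReal * deriv f ((A x).toReal)) * ((P x).toReal - 1)
      ≤ (P x).toReal * fc ((R x).toReal) := by
    filter_upwards [hmema, hmemp, hmemr, hqrp] with x ha hp hr hq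
    have hax := hIcc ha
    have hrx := hIcc hr
    have tangent := tangent_line hf hax hrx (hdiffat _ hax)
    rw [hfc_eq _ ha, hfc_eq _ hr, hq]
    have hp0 : (0:ℝ) ≤ (P x).toReal := le_trans hc0.le hp.1
    have h2 := mul_le_mul_of_nonneg_left tangent hp0
    linarith only [h2]
  have int_big : Integrable (fun x => fc ((A x).toReal)
      + deriv f ((A x).toReal) * ((Q x).toReal - (A x).toReal)
      + (fc ((A x).toReal) - (A x).toReal * deriv f ((A x).toReal))
        * ((P x).toReal - 1)) ν := by
    have h := int_fca.add ((int_qφ.add int_pt3).sub (int_aφ.add int_t3ν))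
    exact h.congr (Filter.Eventually.of_forall fun x => by
      simp only [Pi.add_apply, Pi.sub_apply, Pi.neg_apply]
      ring)
  have G9 := integral_mono_ae int_big int_pfr G8
  have G10 : ∫ x, (fc ((A x).toReal)
        + deriv f ((A x).toReal) * ((Q x).toReal - (A x).toReal)
        + (fc ((A x).toReal) - (A x).toReal * deriv f ((A x).toReal))
          * ((P x).toReal - 1)) ∂ν
      = ∫ x, fc ((A x).toReal) ∂ν
        + ((∫ x, (Q x).toReal * deriv f ((A x).toReal) ∂ν
            + ∫ x, (P x).toReal * (fc ((A x).toReal)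
              - (A x).toReal * deriv f ((A x).toReal)) ∂ν)
          - (∫ x, (A x).toReal * deriv f ((A x).toReal) ∂ν
            + ∫ x, (fc ((A x).toReal)
              - (A x).toReal * deriv f ((A x).toReal)) ∂ν)) := by
    have h23 : Integrable (fun x => (Q x).toReal * deriv f ((A x).toReal)
        + (P x).toReal * (fc ((A x).toReal) - (A x).toReal * deriv f ((A x).toReal))) ν :=
      int_qφ.add int_pt3
    have h45 : Integrable (fun x => (A x).toReal * deriv f ((A x).toReal)
        + (fc ((A x).toReal) - (A x).toReal * deriv f ((A x).toReal))) ν :=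
      int_aφ.add int_t3ν
    have hsub : Integrable (fun x => ((Q x).toReal * deriv f ((A x).toReal)
        + (P x).toReal * (fc ((A x).toReal) - (A x).toReal * deriv f ((A x).toReal)))
        - ((A x).toReal * deriv f ((A x).toReal)
        + (fc ((A x).toReal) - (A x).toReal * deriv f ((A x).toReal)))) ν := h23.sub h45
    calc ∫ x, (fc ((A x).toReal)
        + deriv f ((A x).toReal) * ((Q x).toReal - (A x).toReal)
        + (fc ((A x).toReal) - (A x).toReal * deriv f ((A x).toReal))
          * ((P x).toReal - 1)) ∂ν
        = ∫ x, (fc ((A x).toReal)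
          + (((Q x).toReal * deriv f ((A x).toReal)
            + (P x).toReal * (fc ((A x).toReal) - (A x).toReal * deriv f ((A x).toReal)))
          - ((A x).toReal * deriv f ((A x).toReal)
            + (fc ((A x).toReal) - (A x).toReal * deriv f ((A x).toReal))))) ∂ν :=
        integral_congr_ae (Filter.Eventually.of_forall fun x => by ring)
      _ = (∫ x, fc ((A x).toReal) ∂ν)
          + ∫ x, (((Q x).toReal * deriv f ((A x).toReal)
            + (P x).toReal * (fc ((A x).toReal) - (A x).toReal * deriv f ((A x).toReal)))
          - ((A x).toReal * deriv f ((A x).toReal)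
            + (fc ((A x).toReal) - (A x).toReal * deriv f ((A x).toReal)))) ∂ν :=
        integral_add int_fca hsub
      _ = (∫ x, fc ((A x).toReal) ∂ν)
          + ((∫ x, ((Q x).toReal * deriv f ((A x).toReal)
            + (P x).toReal * (fc ((A x).toReal) - (A x).toReal * deriv f ((A x).toReal))) ∂ν)
          - ∫ x, ((A x).toReal * deriv f ((A x).toReal)
            + (fc ((A x).toReal) - (A x).toReal * deriv f ((A x).toReal))) ∂ν) := by
        rw [integral_sub h23 h45]
      _ = ∫ x, fc ((A x).toReal) ∂ν
        + ((∫ x, (Q x).toReal * deriv f ((A x).toReal) ∂ν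
            + ∫ x, (P x).toReal * (fc ((A x).toReal)
              - (A x).toReal * deriv f ((A x).toReal)) ∂ν)
          - (∫ x, (A x).toReal * deriv f ((A x).toReal) ∂ν
            + ∫ x, (fc ((A x).toReal)
              - (A x).toReal * deriv f ((A x).toReal)) ∂ν)) := by
        rw [integral_add int_qφ int_pt3, integral_add int_aφ int_t3ν]
  rw [ge_iff_le, G1, G2, G3, G4]
  linarith [G5, G6, G7, G9, G10]
end

section
/- Let F_d be the free group on d ≥ 2 generators and μ a generating probability measure supported on the generators and their inverses, with p_j = μ(a_j) for j = ±1,…,±d. Then there exist unique numbers q_j ∈ (0,1) satisfying q_j = p_j + q_j·Σ_{i≠j} p_i·q_{−i} for all j. -/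
/-!
Put `t = 1 - ∑ i, p i * q (-i)`. The equation for `j` becomes
`q j * t + p j * q j * q (-j) = p j`; comparing it with the equation for `-j` gives
`p (-j) * q j = p j * q (-j)`, so `x j = p j * q (-j)` is the positive root of
`x ^ 2 + t * x = p j * p (-j)`, and `q` is determined by `t`. What remains is the scalar equation
`∑ j, x j t + t = 1`. Since each `x j` is convex in `t` and `∑ j, x j 0 = ∑ j, √(p j * p (-j)) ≤ 1`
(AM-GM), the ratio `(∑ j, x j t + t - 1) / t` is strictly increasing on `t > 0`, so there is at most
one positive root; it exists because the ratio is negative near `0` (each `x j` has slope `-1/2`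
there and there are more than two indices) and positive at `1`. Finally `q j < 1` amounts to
`p j - p (-j) < t`, and the ratio is already negative at `t = p j - p (-j)`.
-/

open Finset
open scoped Pointwise

theorem Real.sqrt_mul_le_add_div_two {x y : ℝ} (hx : 0 ≤ x) (hy : 0 ≤ y) :
    √(x * y) ≤ (x + y) / 2 :=
  Real.sqrt_le_iff.2 ⟨by positivity, by nlinarith [sq_nonneg (x - y)]⟩

noncomputable def posRoot (a t : ℝ) : ℝ := (√(t ^ 2 + 4 * a) - t) / 2

section posRoot

variable {a t : ℝ}

theorem posRoot_sq_add_mul (ha : 0 ≤ a) : posRoot a t ^ 2 + t * posRoot a t = a := by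
  have h := Real.sq_sqrt (by positivity : 0 ≤ t ^ 2 + 4 * a)
  unfold posRoot
  linear_combination h / 4

theorem posRoot_pos (ha : 0 < a) : 0 < posRoot a t := by
  have : t < √(t ^ 2 + 4 * a) := by
    rcases lt_or_ge t 0 with ht | ht
    · exact ht.trans_le (Real.sqrt_nonneg _)
    · exact (Real.lt_sqrt ht).2 (by linarith)
  unfold posRoot
  linarith

theorem posRoot_zero (ha : 0 ≤ a) : posRoot a 0 = √a := by
  have : √(4 * a) = 2 * √a := by
    rw [Real.sqrt_mul' _ ha, show (4 : ℝ) = 2 ^ 2 by norm_num, Real.sqrt_sq zero_le_two]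
  simp [posRoot, this]

theorem eq_posRoot {x : ℝ} (hx : 0 ≤ x) (ht : 0 ≤ t) (h : x ^ 2 + t * x = a) :
    x = posRoot a t := by
  have : √(t ^ 2 + 4 * a) = 2 * x + t := by
    rw [← h, show t ^ 2 + 4 * (x ^ 2 + t * x) = (2 * x + t) ^ 2 by ring,
      Real.sqrt_sq (by positivity)]
  rw [posRoot, this]
  ring

theorem continuous_posRoot : Continuous (posRoot a) := by
  unfold posRoot
  fun_prop

theorem posRoot_lt_of_lt {b : ℝ} (ha : 0 ≤ a) (hb : 0 ≤ b) (ht : 0 ≤ t) (h : a < b ^ 2 + t * b) :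
    posRoot a t < b := by
  by_contra! hle
  have := posRoot_sq_add_mul (t := t) ha
  nlinarith [mul_le_mul_of_nonneg_left hle ht]

theorem posRoot_lt_sqrt (ha : 0 < a) (ht : 0 < t) : posRoot a t < √a :=
  posRoot_lt_of_lt ha.le (Real.sqrt_nonneg a) ht.le <| by
    rw [Real.sq_sqrt ha.le]; nlinarith [Real.sqrt_pos.2 ha]

theorem strictAntiOn_posRoot (ha : 0 < a) : StrictAntiOn (posRoot a) (Set.Ici 0) := by
  intro u hu t ht hut
  exact posRoot_lt_of_lt ha.le (posRoot_pos ha).le ht <| by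
    have := posRoot_sq_add_mul (t := u) ha.le
    nlinarith [posRoot_pos (t := u) ha]

/-- From `(x - √a) * (x + √a) = x ^ 2 - a = -t * x` for `x = posRoot a t`. -/
theorem posRoot_sub_sqrt_div (ha : 0 < a) (ht : t ≠ 0) :
    (posRoot a t - √a) / t = √a / (posRoot a t + √a) - 1 := by
  have hx := (add_pos (posRoot_pos (t := t) ha) (Real.sqrt_pos.2 ha)).ne'
  have := posRoot_sq_add_mul (t := t) ha.le
  rw [div_sub_one hx, div_eq_div_iff ht hx]
  linear_combination this - Real.sq_sqrt ha.le

theorem strictMonoOn_posRoot_sub_sqrt_div (ha : 0 < a) :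
    StrictMonoOn (fun t => (posRoot a t - √a) / t) (Set.Ioi 0) := by
  intro u hu t ht hut
  have hu' : 0 < u := hu
  have ht' : 0 < t := ht
  have hx := posRoot_pos (t := t) ha
  have hanti := strictAntiOn_posRoot ha (Set.mem_Ici.2 hu'.le) (Set.mem_Ici.2 ht'.le) hut
  dsimp only
  rw [posRoot_sub_sqrt_div ha hu'.ne', posRoot_sub_sqrt_div ha ht'.ne', sub_lt_sub_iff_right]
  gcongr

end posRoot

section root

variable {κ : Type*} {s : Finset κ} {a : κ → ℝ} {t u : ℝ}

theorem sum_posRoot_add_sub_one_div (ht : t ≠ 0) :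
    (∑ i ∈ s, posRoot (a i) t + t - 1) / t =
      ∑ i ∈ s, (posRoot (a i) t - √(a i)) / t + (∑ i ∈ s, √(a i) - 1) / t + 1 := by
  rw [← Finset.sum_div, Finset.sum_sub_distrib]
  field_simp
  ring

theorem strictMonoOn_sum_posRoot_add_sub_one_div (hs : s.Nonempty) (ha : ∀ i ∈ s, 0 < a i)
    (hsqrt : ∑ i ∈ s, √(a i) ≤ 1) :
    StrictMonoOn (fun t => (∑ i ∈ s, posRoot (a i) t + t - 1) / t) (Set.Ioi 0) := by
  intro u hu t ht hut
  have hu' : 0 < u := hu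
  have ht' : 0 < t := ht
  simp only [sum_posRoot_add_sub_one_div hu'.ne', sum_posRoot_add_sub_one_div ht'.ne']
  refine add_lt_add_of_lt_of_le (add_lt_add_of_lt_of_le ?_ ?_) le_rfl
  · exact sum_lt_sum_of_nonempty hs fun i hi =>
      strictMonoOn_posRoot_sub_sqrt_div (ha i hi) hu ht hut
  · rw [div_le_div_iff₀ hu' ht']
    nlinarith

theorem lt_of_sum_posRoot_add_lt_one (hs : s.Nonempty) (ha : ∀ i ∈ s, 0 < a i)
    (hsqrt : ∑ i ∈ s, √(a i) ≤ 1) (hu : 0 < u) (ht : 0 < t)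
    (hu1 : ∑ i ∈ s, posRoot (a i) u + u < 1) (ht1 : ∑ i ∈ s, posRoot (a i) t + t = 1) : u < t := by
  refine (strictMonoOn_sum_posRoot_add_sub_one_div hs ha hsqrt).lt_iff_lt hu ht |>.1 ?_
  simp only [ht1, sub_self, zero_div]
  exact div_neg_of_neg_of_pos (by linarith) hu

theorem eq_of_sum_posRoot_add_eq_one (hs : s.Nonempty) (ha : ∀ i ∈ s, 0 < a i)
    (hsqrt : ∑ i ∈ s, √(a i) ≤ 1) (hu : 0 < u) (ht : 0 < t)
    (hu1 : ∑ i ∈ s, posRoot (a i) u + u = 1) (ht1 : ∑ i ∈ s, posRoot (a i) t + t = 1) : u = t :=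
  (strictMonoOn_sum_posRoot_add_sub_one_div hs ha hsqrt).injOn hu ht <| by
    simp only [hu1, ht1, sub_self, zero_div]

/-- Near `0` the ratio `(∑ i ∈ s, posRoot (a i) t + t - 1) / t` is bounded by
`∑ i ∈ s, (√(a i) / (posRoot (a i) t + √(a i)) - 1) + 1`, which is continuous with value
`1 - #s / 2 < 0` at `t = 0`. -/
theorem exists_sum_posRoot_add_lt_one (hs : 2 < s.card) (ha : ∀ i ∈ s, 0 < a i)
    (hsqrt : ∑ i ∈ s, √(a i) ≤ 1) : ∃ t ∈ Set.Ioo 0 1, ∑ i ∈ s, posRoot (a i) t + t < 1 := by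
  set bound : ℝ → ℝ := fun t => ∑ i ∈ s, (√(a i) / (posRoot (a i) t + √(a i)) - 1) + 1
  have hbound0 : bound 0 < 0 := by
    have (i) (hi : i ∈ s) : √(a i) / (posRoot (a i) 0 + √(a i)) - 1 = -1 / 2 := by
      have := Real.sqrt_pos.2 (ha i hi)
      rw [posRoot_zero (ha i hi).le]
      field_simp
      ring
    simp only [bound, sum_congr rfl this, sum_const, nsmul_eq_mul]
    have : (2 : ℝ) < s.card := by exact_mod_cast hs
    linarith
  have hcont : Continuous bound := by
    refine continuous_finsetSum _ (fun i hi => ?_) |>.add continuous_const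
    have := Real.sqrt_pos.2 (ha i hi)
    refine (continuous_const.div (continuous_posRoot.add continuous_const) fun t => ?_).sub
      continuous_const
    exact (add_pos (posRoot_pos (ha i hi)) this).ne'
  obtain ⟨t, hbound, ht⟩ : ∃ t, bound t < 0 ∧ t ∈ Set.Ioo 0 1 :=
    ((hcont.continuousAt.eventually_lt continuousAt_const hbound0).filter_mono
      nhdsWithin_le_nhds |>.and (Ioo_mem_nhdsGT one_pos)).exists
  refine ⟨t, ht, ?_⟩
  have hratio : (∑ i ∈ s, posRoot (a i) t + t - 1) / t ≤ bound t := by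
    rw [sum_posRoot_add_sub_one_div ht.1.ne']
    simp only [bound, ← sum_congr rfl fun i hi => posRoot_sub_sqrt_div (ha i hi) ht.1.ne']
    have : (∑ i ∈ s, √(a i) - 1) / t ≤ 0 := div_nonpos_of_nonpos_of_nonneg (by linarith) ht.1.le
    linarith
  have := (div_lt_iff₀ ht.1).1 (hratio.trans_lt hbound)
  linarith

theorem exists_sum_posRoot_add_eq_one (hs : 2 < s.card) (ha : ∀ i ∈ s, 0 < a i)
    (hsqrt : ∑ i ∈ s, √(a i) ≤ 1) : ∃ t, 0 < t ∧ ∑ i ∈ s, posRoot (a i) t + t = 1 := by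
  obtain ⟨t₀, ht₀, hlt⟩ := exists_sum_posRoot_add_lt_one hs ha hsqrt
  have hgt : 1 < ∑ i ∈ s, posRoot (a i) 1 + 1 := by
    simpa using sum_pos (fun i hi => posRoot_pos (ha i hi)) (card_pos.1 (by omega))
  have hcont : Continuous fun t => ∑ i ∈ s, posRoot (a i) t + t :=
    (continuous_finsetSum _ fun i _ => continuous_posRoot).add continuous_id
  obtain ⟨t, ht, hroot⟩ := intermediate_value_Ioo ht₀.2.le hcont.continuousOn ⟨hlt, hgt⟩
  exact ⟨t, ht₀.1.trans ht.1, hroot⟩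

end root

/-- The candidate solution determined by `t = 1 - ∑ i ∈ s, p i * q (-i)`; it is the solution when
`∑ i ∈ s, posRoot (p i * p (-i)) t + t = 1`. -/
noncomputable def hittingProb {ι : Type*} [InvolutiveNeg ι] [DecidableEq ι] (s : Finset ι)
    (p : ι → ℝ) (t : ℝ) (j : ι) : ℝ :=
  if j ∈ s then posRoot (p j * p (-j)) t / p (-j) else 0

section hittingProb

variable {ι : Type*} [InvolutiveNeg ι] [DecidableEq ι] {s : Finset ι} {p : ι → ℝ} {t : ℝ} {j : ι}

theorem sum_add_neg_div_two (hs : -s = s) (hsum : ∑ i ∈ s, p i = 1) :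
    ∑ i ∈ s, (p i + p (-i)) / 2 = 1 := by
  rw [← sum_div, sum_add_distrib, ← sum_neg_index, hs, hsum]
  norm_num

theorem mul_apply_neg_pos (hs : -s = s) (hp : ∀ i ∈ s, 0 < p i) : ∀ i ∈ s, 0 < p i * p (-i) :=
  fun i hi => mul_pos (hp i hi) (hp (-i) (hs ▸ neg_mem_neg hi))

theorem sum_sqrt_mul_apply_neg_le_one (hs : -s = s) (hp : ∀ i ∈ s, 0 < p i)
    (hsum : ∑ i ∈ s, p i = 1) : ∑ i ∈ s, √(p i * p (-i)) ≤ 1 :=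
  (sum_le_sum fun i hi => Real.sqrt_mul_le_add_div_two (hp i hi).le
    (hp (-i) (hs ▸ neg_mem_neg hi)).le).trans (sum_add_neg_div_two hs hsum).le

theorem mul_hittingProb_neg (hs : -s = s) (hp : ∀ i ∈ s, 0 < p i) (hj : j ∈ s) :
    p j * hittingProb s p t (-j) = posRoot (p j * p (-j)) t := by
  rw [hittingProb, if_pos (hs ▸ neg_mem_neg hj), neg_neg, mul_comm (p (-j)),
    mul_div_cancel₀ _ (hp j hj).ne']

theorem hittingProb_pos (hs : -s = s) (hp : ∀ i ∈ s, 0 < p i) (hj : j ∈ s) :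
    0 < hittingProb s p t j := by
  have hj' := hp (-j) (hs ▸ neg_mem_neg hj)
  rw [hittingProb, if_pos hj]
  exact div_pos (posRoot_pos (mul_pos (hp j hj) hj')) hj'

theorem hittingProb_eq (hs : -s = s) (hp : ∀ i ∈ s, 0 < p i)
    (hroot : ∑ i ∈ s, posRoot (p i * p (-i)) t + t = 1) (hj : j ∈ s) :
    hittingProb s p t j =
      p j + hittingProb s p t j * ∑ i ∈ s.erase j, p i * hittingProb s p t (-i) := by
  have hj' := hp (-j) (hs ▸ neg_mem_neg hj)
  have hx := posRoot_sq_add_mul (t := t) (mul_pos (hp j hj) hj').le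
  rw [sum_erase_eq_sub hj, sum_congr rfl fun i hi => mul_hittingProb_neg hs hp hi,
    mul_hittingProb_neg hs hp hj, eq_sub_of_add_eq hroot, hittingProb, if_pos hj]
  field_simp
  linear_combination hx

theorem sum_posRoot_add_sub_lt_one (hs : -s = s) (hp : ∀ i ∈ s, 0 < p i)
    (hsum : ∑ i ∈ s, p i = 1) (hj : j ∈ s) {k : ι} (hk : k ∈ s) (hkj : k ≠ j) (hkj' : k ≠ -j)
    (hu : 0 < p j - p (-j)) :
    ∑ i ∈ s, posRoot (p i * p (-i)) (p j - p (-j)) + (p j - p (-j)) < 1 := by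
  set u := p j - p (-j)
  set gap : ι → ℝ := fun i => (p i + p (-i)) / 2 - posRoot (p i * p (-i)) u
  have hgap_pos (i) (hi : i ∈ s) : 0 < gap i :=
    sub_pos.2 <| (posRoot_lt_sqrt (mul_apply_neg_pos hs hp i hi) hu).trans_le
      (Real.sqrt_mul_le_add_div_two (hp i hi).le (hp (-i) (hs ▸ neg_mem_neg hi)).le)
  have hroot_j : posRoot (p j * p (-j)) u = p (-j) :=
    (eq_posRoot (hp _ (hs ▸ neg_mem_neg hj)).le hu.le (by ring)).symm
  have hgap_j : gap j = u / 2 := by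
    simp only [gap, hroot_j]; ring
  have hgap_neg_j : gap (-j) = u / 2 := by
    simp only [gap, neg_neg, mul_comm (p (-j)), hroot_j]; ring
  have hj_ne : j ≠ -j := fun h => hu.ne' (show p j - p (-j) = 0 by rw [← h, sub_self])
  have : u < ∑ i ∈ s, gap i := calc
    u < gap j + (gap (-j) + gap k) := by linarith [hgap_pos k hk]
    _ = ∑ i ∈ {j, -j, k}, gap i := by
      rw [sum_insert (by simp [hj_ne, hkj.symm]), sum_insert (by simpa using hkj'.symm),
        sum_singleton]
    _ ≤ ∑ i ∈ s, gap i := sum_le_sum_of_subset_of_nonneg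
      (by simp [insert_subset_iff, hj, hk, hs ▸ neg_mem_neg hj]) fun i hi _ => (hgap_pos i hi).le
  simp only [gap, sum_sub_distrib, sum_add_neg_div_two hs hsum] at this
  linarith

theorem sub_apply_neg_lt_of_sum_posRoot_add_eq_one (hs : -s = s) (hp : ∀ i ∈ s, 0 < p i)
    (hsum : ∑ i ∈ s, p i = 1) (hcard : 2 < s.card) (ht : 0 < t)
    (hroot : ∑ i ∈ s, posRoot (p i * p (-i)) t + t = 1) (hj : j ∈ s) : p j - p (-j) < t := by
  rcases le_or_gt (p j - p (-j)) 0 with hu | hu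
  · linarith
  obtain ⟨k, hk, hkj⟩ := exists_mem_notMem_of_card_lt_card (card_le_two.trans_lt hcard)
  simp only [mem_insert, mem_singleton, not_or] at hkj
  exact lt_of_sum_posRoot_add_lt_one (card_pos.1 (by omega)) (mul_apply_neg_pos hs hp)
    (sum_sqrt_mul_apply_neg_le_one hs hp hsum) hu ht
    (sum_posRoot_add_sub_lt_one hs hp hsum hj hk hkj.1 hkj.2 hu) hroot

theorem hittingProb_lt_one (hs : -s = s) (hp : ∀ i ∈ s, 0 < p i)
    (hsum : ∑ i ∈ s, p i = 1) (hcard : 2 < s.card) (ht : 0 < t)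
    (hroot : ∑ i ∈ s, posRoot (p i * p (-i)) t + t = 1) (hj : j ∈ s) :
    hittingProb s p t j < 1 := by
  have hj' := hp (-j) (hs ▸ neg_mem_neg hj)
  have hlt := sub_apply_neg_lt_of_sum_posRoot_add_eq_one hs hp hsum hcard ht hroot hj
  rw [hittingProb, if_pos hj, div_lt_one hj']
  exact posRoot_lt_of_lt (mul_apply_neg_pos hs hp j hj).le hj'.le ht.le <| by
    nlinarith [mul_pos hj' (sub_pos.2 hlt)]

theorem exists_eq_hittingProb_of_solution (hs : -s = s) (hp : ∀ i ∈ s, 0 < p i)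
    (hsum : ∑ i ∈ s, p i = 1) {q : ι → ℝ} (hq0 : ∀ j ∉ s, q j = 0)
    (hq : ∀ j ∈ s, q j ∈ Set.Ioo 0 1 ∧ q j = p j + q j * ∑ i ∈ s.erase j, p i * q (-i)) :
    ∃ t, 0 < t ∧ ∑ i ∈ s, posRoot (p i * p (-i)) t + t = 1 ∧ q = hittingProb s p t := by
  set t := 1 - ∑ i ∈ s, p i * q (-i)
  have hneg (i) (hi : i ∈ s) : -i ∈ s := hs ▸ neg_mem_neg hi
  have ht : 0 < t := by
    have : ∑ i ∈ s, p i * q (-i) < ∑ i ∈ s, p i :=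
      sum_lt_sum_of_nonempty (nonempty_of_sum_ne_zero (hsum ▸ one_ne_zero)) fun i hi =>
        mul_lt_of_lt_one_right (hp i hi) (hq (-i) (hneg i hi)).1.2
    linarith
  have hE (j) (hj : j ∈ s) : q j * t + p j * (q j * q (-j)) = p j := by
    have := (hq j hj).2
    rw [sum_erase_eq_sub hj] at this
    linear_combination this
  have hsymm (j) (hj : j ∈ s) : p (-j) * q j = p j * q (-j) := by
    have h := hE (-j) (hneg j hj)
    rw [neg_neg] at h
    exact mul_right_cancel₀ ht.ne' (by linear_combination p (-j) * hE j hj - p j * h)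
  have hroot_eq (j) (hj : j ∈ s) : p j * q (-j) = posRoot (p j * p (-j)) t :=
    eq_posRoot (mul_pos (hp j hj) (hq (-j) (hneg j hj)).1.1).le ht.le <| by
      linear_combination (p j * q (-j) + t) * (hsymm j hj).symm + p (-j) * hE j hj
  refine ⟨t, ht, ?_, funext fun j => ?_⟩
  · rw [← sum_congr rfl hroot_eq]
    ring
  · by_cases hj : j ∈ s
    · rw [hittingProb, if_pos hj, ← hroot_eq j hj, ← hsymm j hj,
        mul_div_cancel_left₀ _ (hp (-j) (hneg j hj)).ne']
    · rw [hittingProb, if_neg hj, hq0 j hj]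

end hittingProb

theorem exists_unique_hitting_probabilities_general (d : ℕ) (hd : 2 ≤ d)
    (p : ℤ → ℝ)
    (hpos : ∀ j ∈ Finset.Icc (1:ℤ) d ∪ Finset.Icc (-(d:ℤ)) (-1), 0 < p j)
    (hsum : ∑ j ∈ Finset.Icc (1:ℤ) d ∪ Finset.Icc (-(d:ℤ)) (-1), p j = 1) :
    ∃! q : ℤ → ℝ,
      (∀ j ∉ Finset.Icc (1:ℤ) d ∪ Finset.Icc (-(d:ℤ)) (-1), q j = 0) ∧
      ∀ j ∈ Finset.Icc (1:ℤ) d ∪ Finset.Icc (-(d:ℤ)) (-1),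
        q j ∈ Set.Ioo (0:ℝ) 1 ∧
        q j = p j + q j *
          ∑ i ∈ (Finset.Icc (1:ℤ) d ∪ Finset.Icc (-(d:ℤ)) (-1)).erase j,
            p i * q (-i) := by
  set A := Finset.Icc (1:ℤ) d ∪ Finset.Icc (-(d:ℤ)) (-1)
  have hA : -A = A := by
    ext j
    simp only [A, mem_neg', mem_union, mem_Icc]
    omega
  have hcard : 2 < A.card := by
    rw [card_union_of_disjoint (disjoint_left.2 fun j hj hj' => by
      simp only [mem_Icc] at hj hj'; omega), Int.card_Icc, Int.card_Icc]
    omega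
  obtain ⟨t, ht, hroot⟩ := exists_sum_posRoot_add_eq_one hcard (mul_apply_neg_pos hA hpos)
    (sum_sqrt_mul_apply_neg_le_one hA hpos hsum)
  refine ⟨hittingProb A p t, ⟨fun j hj => if_neg hj, fun j hj => ⟨⟨hittingProb_pos hA hpos hj,
    hittingProb_lt_one hA hpos hsum hcard ht hroot hj⟩, hittingProb_eq hA hpos hroot hj⟩⟩, ?_⟩
  rintro q ⟨hq0, hq⟩
  obtain ⟨t', ht', hroot', rfl⟩ := exists_eq_hittingProb_of_solution hA hpos hsum hq0 hq
  rw [eq_of_sum_posRoot_add_eq_one (card_pos.1 (by omega)) (mul_apply_neg_pos hA hpos)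
    (sum_sqrt_mul_apply_neg_le_one hA hpos hsum) ht' ht hroot' hroot]

/-- For the free group `F_d` (`d ≥ 2`) and a generating probability measure
supported on the generators and their inverses (indices `j ∈ {±1,…,±d}`, with
`p_j = μ(a_j) > 0` and `Σ p_j = 1`), there exist unique numbers `q_j ∈ (0,1)`
satisfying `q_j = p_j + q_j·Σ_{i≠j} p_i·q_{−i}` for all `j`. -/
theorem exists_unique_hitting_probabilities (d : ℕ) (hd : 2 ≤ d)
    (p : ℤ → ℝ)
    (hpos : ∀ j ∈ Finset.Icc (1:ℤ) d ∪ Finset.Icc (-(d:ℤ)) (-1), 0 < p j)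
    (hzero : ∀ j ∉ Finset.Icc (1:ℤ) d ∪ Finset.Icc (-(d:ℤ)) (-1), p j = 0)
    (hsum : ∑ j ∈ Finset.Icc (1:ℤ) d ∪ Finset.Icc (-(d:ℤ)) (-1), p j = 1) :
    ∃! q : ℤ → ℝ,
      (∀ j ∉ Finset.Icc (1:ℤ) d ∪ Finset.Icc (-(d:ℤ)) (-1), q j = 0) ∧
      ∀ j ∈ Finset.Icc (1:ℤ) d ∪ Finset.Icc (-(d:ℤ)) (-1),
        q j ∈ Set.Ioo (0:ℝ) 1 ∧
        q j = p j + q j *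
          ∑ i ∈ (Finset.Icc (1:ℤ) d ∪ Finset.Icc (-(d:ℤ)) (-1)).erase j,
            p i * q (-i) :=
  exists_unique_hitting_probabilities_general d hd p hpos hsum
end

section
/- For a probability measure μ on the free group F_d supported on the generators and their inverses (with all p_i > 0), the system q_j = p_j + q_j·Σ_{i≠j} p_i q_{−i} with q_j ∈ (0,1) reduces to finding x ∈ (0,1) with f(x) = 0, where f(x) = (d−1)x + 1 − Σ_{j=1}^d √(x² + 4p_j p_{−j}); and indeed f(0) ≥ 0, f(1) < 0, f is concave, and f has a unique zero in (0,1). -/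
/-!
Each `√(x² + c)` with `c > 0` is strictly convex (strict Cauchy–Schwarz), so `f` is strictly
concave. By AM–GM `√(4 p_j p_{−j}) ≤ p_j + p_{−j}`, whence `f(0) ≥ 0`; each `√(1 + 4 p_j p_{−j})`
exceeds `1`, whence `f(1) < 0`; and `f'(0) = d − 1 > 0`. So `f` is positive just right of `0` and
has a zero in `(0,1)`; strict concavity and `f(0) ≥ 0` make `f` positive on `(0, z)` for every
positive zero `z`, which gives uniqueness.

At the zero `x` put `s_j = √(x² + 4 p_j p_{−j})`, so that `Σ_{j ≤ d} s_j = (d − 1)x + 1`. As every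
`s_i < x + p_i + p_{−i}`, subtracting the other `d − 1` terms leaves `s_j > p_j + p_{−j}`, i.e.
`|p_j − p_{−j}| < x`, which is `q_j < 1`. Moreover `p_i q_{−i} = (s_i − x)/2`, so
`Σ_{i ≠ j} p_i q_{−i} = 1 − (x + s_j)/2` and the equation for `q_j` becomes `q_j (x + s_j)/2 = p_j`,
i.e. `(s_j − x)(s_j + x) = 4 p_j p_{−j}`.
-/

open Finset

theorem mul_add_lt_sqrt_sq_add_mul_sqrt_sq_add {c x y : ℝ} (hc : 0 < c) (hxy : x ≠ y) :
    x * y + c < √(x ^ 2 + c) * √(y ^ 2 + c) := by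
  rw [← Real.sqrt_mul (by positivity)]
  apply Real.lt_sqrt_of_sq_lt
  have : 0 < (x - y) ^ 2 := by positivity [sub_ne_zero.mpr hxy]
  nlinarith

theorem strictConvexOn_sqrt_sq_add {c : ℝ} (hc : 0 < c) :
    StrictConvexOn ℝ Set.univ (fun x : ℝ => √(x ^ 2 + c)) := by
  refine ⟨convex_univ, fun x _ y _ hxy a b ha hb hab => ?_⟩
  have hsx := Real.sq_sqrt (show 0 ≤ x ^ 2 + c by positivity)
  have hsy := Real.sq_sqrt (show 0 ≤ y ^ 2 + c by positivity)
  have hcs := mul_lt_mul_of_pos_left (mul_add_lt_sqrt_sq_add_mul_sqrt_sq_add hc hxy) (mul_pos ha hb)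
  obtain rfl : b = 1 - a := by linarith
  simp only [smul_eq_mul]
  rw [Real.sqrt_lt' (by positivity)]
  -- `(a s + b t)² − (a x + b y)² − c = 2ab (s t − x y − c)` when `a + b = 1`
  linear_combination 2 * hcs - a ^ 2 * hsx - (1 - a) ^ 2 * hsy

theorem StrictConvexOn.finset_sum {ι : Type*} {s : Set ℝ} {t : Finset ι} {f : ι → ℝ → ℝ}
    (ht : t.Nonempty) (hf : ∀ i ∈ t, StrictConvexOn ℝ s (f i)) :
    StrictConvexOn ℝ s (fun x => ∑ i ∈ t, f i x) := by
  induction ht using Finset.Nonempty.cons_induction with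
  | singleton a => simpa using hf a (mem_singleton_self a)
  | cons a t ha _ ih =>
    simp only [sum_cons]
    exact (hf a (mem_cons_self a t)).add (ih fun i hi => hf i (mem_cons_of_mem hi))

theorem hasDerivAt_sqrt_sq_add_zero {c : ℝ} (hc : 0 < c) :
    HasDerivAt (fun x : ℝ => √(x ^ 2 + c)) 0 0 := by
  simpa using ((hasDerivAt_pow 2 (0 : ℝ)).add_const c).sqrt (by positivity)

theorem StrictConcaveOn.existsUnique_zero_mem_Ioo {f : ℝ → ℝ} {f' b : ℝ}
    (hf : StrictConcaveOn ℝ Set.univ f) (hb : 0 < b) (h0 : 0 ≤ f 0) (hfb : f b < 0)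
    (hf' : HasDerivAt f f' 0) (hf'pos : 0 < f') : ∃! x, x ∈ Set.Ioo 0 b ∧ f x = 0 := by
  have pos_before_zero : ∀ y z, 0 < y → y < z → f z = 0 → 0 < f y := fun y z hy hyz hz => by
    have := hf.lt_on_openSegment (Set.mem_univ 0) (Set.mem_univ z) (hy.trans hyz).ne
      (by rw [openSegment_eq_Ioo (hy.trans hyz)]; exact ⟨hy, hyz⟩)
    rwa [hz, min_eq_right h0] at this
  obtain ⟨t, ht, hft⟩ : ∃ t ∈ Set.Ioo 0 b, 0 < f t := by
    have hslope := (hf'.tendsto_slope_zero_right.eventually (lt_mem_nhds hf'pos)).and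
      (Ioo_mem_nhdsGT hb)
    obtain ⟨t, hslope_pos, ht⟩ := hslope.exists
    refine ⟨t, ht, ?_⟩
    simp only [zero_add, smul_eq_mul] at hslope_pos
    nlinarith [(mul_pos_iff_of_pos_left (inv_pos.mpr ht.1)).mp hslope_pos]
  obtain ⟨x, hx, hfx⟩ := intermediate_value_Ioo' ht.2.le
    ((hf.concaveOn.continuousOn isOpen_univ).mono (Set.subset_univ _)) ⟨hfb, hft⟩
  refine ⟨x, ⟨⟨ht.1.trans hx.1, hx.2⟩, hfx⟩, fun y ⟨hy, hfy⟩ => ?_⟩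
  rcases lt_trichotomy y x with hyx | rfl | hxy
  · exact absurd hfy (pos_before_zero y x hy.1 hyx hfx).ne'
  · rfl
  · exact absurd hfx (pos_before_zero x y (ht.1.trans hx.1) hxy hfy).ne'

theorem lt_of_sum_eq_card_sub_one_mul_add_sum {ι : Type*} [DecidableEq ι] {t : Finset ι}
    {s w : ι → ℝ} {x : ℝ} (hlt : ∀ i ∈ t, s i < x + w i)
    (hsum : ∑ i ∈ t, s i = (#t - 1 : ℝ) * x + ∑ i ∈ t, w i) {k : ι} (hk : k ∈ t)
    (ht : 1 < #t) : w k < s k := by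
  have hne : (t.erase k).Nonempty := by
    rw [← card_pos, card_erase_of_mem hk]; omega
  have hrest := sum_lt_sum_of_nonempty hne fun i hi => hlt i (mem_of_mem_erase hi)
  have hcard : (#(t.erase k) : ℝ) = #t - 1 := by
    rw [← card_erase_add_one hk]; push_cast; ring
  rw [sum_add_distrib, sum_const, nsmul_eq_mul, hcard] at hrest
  linarith [sum_erase_add t s hk, sum_erase_add t w hk]

theorem sqrt_sq_add_four_mul_lt {a b x : ℝ} (ha : 0 < a) (hb : 0 < b) (hx : 0 < x) :
    √(x ^ 2 + 4 * a * b) < x + (a + b) := by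
  rw [Real.sqrt_lt' (by positivity)]
  nlinarith [sq_nonneg (a - b), mul_pos hx (add_pos ha hb)]

theorem abs_sub_lt_of_add_lt_sqrt {a b x : ℝ} (hx : 0 ≤ x) (hab : 0 ≤ a + b)
    (h : a + b < √(x ^ 2 + 4 * a * b)) : |a - b| < x := by
  rw [Real.lt_sqrt hab] at h
  exact abs_lt_of_sq_lt_sq (by linarith) hx

theorem neg_add_sqrt_div_mem_Ioo {a b x : ℝ} (ha : 0 < a) (hb : 0 < b) (h : a < x + b) :
    (-x + √(x ^ 2 + 4 * a * b)) / (2 * b) ∈ Set.Ioo 0 1 := by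
  have hlt : x < √(x ^ 2 + 4 * a * b) :=
    (le_abs_self x).trans_lt <| (Real.sqrt_sq_eq_abs x).symm.trans_lt <|
      Real.sqrt_lt_sqrt (sq_nonneg x) (by nlinarith [mul_pos ha hb])
  refine ⟨div_pos (by linarith) (by positivity), (div_lt_one (by positivity)).mpr ?_⟩
  have : √(x ^ 2 + 4 * a * b) < x + 2 * b := by
    rw [Real.sqrt_lt' (by linarith)]; nlinarith
  linarith

theorem neg_add_sqrt_div_mul_add_sqrt_div {a b x : ℝ} (hb : b ≠ 0) (h : 0 ≤ x ^ 2 + 4 * a * b) :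
    (-x + √(x ^ 2 + 4 * a * b)) / (2 * b) * ((x + √(x ^ 2 + 4 * a * b)) / 2) = a := by
  field_simp
  linear_combination Real.sq_sqrt h

-- the indices `±1, …, ±d` of the generators `a_j`
noncomputable def signedRange (d : ℕ) : Finset ℤ := Icc 1 (d : ℤ) ∪ Icc (-(d : ℤ)) (-1)

theorem sum_signedRange {M : Type*} [AddCommMonoid M] (d : ℕ) (g : ℤ → M) :
    ∑ j ∈ signedRange d, g j = ∑ k ∈ Icc (1 : ℤ) d, (g k + g (-k)) := by
  have hdisj : Disjoint (Icc (1 : ℤ) d) (Icc (-(d : ℤ)) (-1)) :=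
    disjoint_left.mpr fun a ha hb => by simp only [mem_Icc] at ha hb; omega
  have himage : Icc (-(d : ℤ)) (-1) = (Icc (1 : ℤ) d).image Neg.neg := by
    ext i; simp only [mem_Icc, mem_image]
    exact ⟨fun h => ⟨-i, by omega, neg_neg i⟩, by rintro ⟨a, ha, rfl⟩; omega⟩
  rw [signedRange, sum_union hdisj, sum_add_distrib, himage, sum_image neg_injective.injOn]

theorem neg_mem_signedRange {d : ℕ} {j : ℤ} (hj : j ∈ signedRange d) : -j ∈ signedRange d := by
  simp only [signedRange, mem_union, mem_Icc] at hj ⊢; omega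

theorem mem_Icc_or_neg_mem_Icc {d : ℕ} {j : ℤ} (hj : j ∈ signedRange d) :
    j ∈ Icc (1 : ℤ) d ∨ -j ∈ Icc (1 : ℤ) d := by
  simp only [signedRange, mem_union, mem_Icc] at hj ⊢; omega

section AbelFunction

variable {d : ℕ} {p : ℤ → ℝ}

noncomputable def abelFunction (d : ℕ) (p : ℤ → ℝ) (x : ℝ) : ℝ :=
  (d - 1) * x + 1 - ∑ j ∈ Icc (1 : ℤ) d, √(x ^ 2 + 4 * p j * p (-j))

theorem pos_and_pos_neg_of_mem_Icc (hpos : ∀ j ∈ signedRange d, 0 < p j) {k : ℤ}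
    (hk : k ∈ Icc (1 : ℤ) d) : 0 < p k ∧ 0 < p (-k) :=
  have hk' : k ∈ signedRange d := mem_union_left _ hk
  ⟨hpos k hk', hpos (-k) (neg_mem_signedRange hk')⟩

theorem strictConcaveOn_abelFunction (hd : 1 ≤ d) (hpos : ∀ j ∈ signedRange d, 0 < p j) :
    StrictConcaveOn ℝ Set.univ (abelFunction d p) := by
  have hS : (Icc (1 : ℤ) d).Nonempty := nonempty_Icc.mpr (by exact_mod_cast hd)
  have haffine : ConcaveOn ℝ Set.univ fun x : ℝ => (d - 1 : ℝ) * x + 1 :=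
    ((LinearMap.mul ℝ ℝ (d - 1 : ℝ)).concaveOn convex_univ).add_const 1
  exact haffine.sub_strictConvexOn <| StrictConvexOn.finset_sum hS fun k hk =>
    have ⟨h, h'⟩ := pos_and_pos_neg_of_mem_Icc hpos hk
    strictConvexOn_sqrt_sq_add (by positivity)

theorem abelFunction_zero_nonneg (hpos : ∀ j ∈ signedRange d, 0 < p j)
    (hsum : ∑ j ∈ signedRange d, p j = 1) : 0 ≤ abelFunction d p 0 := by
  have hamgm : ∀ k ∈ Icc (1 : ℤ) d, √(0 ^ 2 + 4 * p k * p (-k)) ≤ p k + p (-k) := fun k hk => by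
    have ⟨h, h'⟩ := pos_and_pos_neg_of_mem_Icc hpos hk
    rw [Real.sqrt_le_left (by positivity)]
    nlinarith [sq_nonneg (p k - p (-k))]
  rw [sum_signedRange] at hsum
  simpa [abelFunction, hsum] using sum_le_sum hamgm

theorem abelFunction_one_neg (hd : 1 ≤ d) (hpos : ∀ j ∈ signedRange d, 0 < p j) :
    abelFunction d p 1 < 0 := by
  have hS : (Icc (1 : ℤ) d).Nonempty := nonempty_Icc.mpr (by exact_mod_cast hd)
  have hlt := sum_lt_sum_of_nonempty hS fun k hk => show (1 : ℝ) < √(1 ^ 2 + 4 * p k * p (-k)) by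
    have ⟨h, h'⟩ := pos_and_pos_neg_of_mem_Icc hpos hk
    rw [Real.lt_sqrt zero_le_one]
    nlinarith [mul_pos h h']
  have hcard : ∑ _k ∈ Icc (1 : ℤ) d, (1 : ℝ) = d := by simp
  rw [abelFunction]
  linarith

theorem hasDerivAt_abelFunction_zero (hpos : ∀ j ∈ signedRange d, 0 < p j) :
    HasDerivAt (abelFunction d p) (d - 1) 0 := by
  have hsqrt : HasDerivAt (fun x : ℝ => ∑ k ∈ Icc (1 : ℤ) d, √(x ^ 2 + 4 * p k * p (-k))) 0 0 := by
    simpa using HasDerivAt.fun_sum fun k hk =>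
      have ⟨h, h'⟩ := pos_and_pos_neg_of_mem_Icc hpos hk
      hasDerivAt_sqrt_sq_add_zero (by positivity : 0 < 4 * p k * p (-k))
  have h := (((hasDerivAt_id (0 : ℝ)).const_mul (d - 1 : ℝ)).add_const 1).sub hsqrt
  rw [mul_one, sub_zero] at h
  exact h

theorem sub_lt_of_abelFunction_eq_zero (hd : 2 ≤ d) (hpos : ∀ j ∈ signedRange d, 0 < p j)
    (hsum : ∑ j ∈ signedRange d, p j = 1) {x : ℝ} (hx : 0 < x) (hfx : abelFunction d p x = 0)
    {j : ℤ} (hj : j ∈ signedRange d) : p j - p (-j) < x := by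
  have hsqrt_lt : ∀ k ∈ Icc (1 : ℤ) d, √(x ^ 2 + 4 * p k * p (-k)) < x + (p k + p (-k)) :=
    fun k hk =>
      have ⟨h, h'⟩ := pos_and_pos_neg_of_mem_Icc hpos hk
      sqrt_sq_add_four_mul_lt h h' hx
  have hsum_sqrt : ∑ k ∈ Icc (1 : ℤ) d, √(x ^ 2 + 4 * p k * p (-k))
      = (#(Icc (1 : ℤ) d) - 1 : ℝ) * x + ∑ k ∈ Icc (1 : ℤ) d, (p k + p (-k)) := by
    rw [← sum_signedRange, hsum, Int.card_Icc]
    simp only [abelFunction] at hfx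
    push_cast [show ((d : ℤ) + 1 - 1).toNat = d by omega]
    linarith
  have hbalance : ∀ k ∈ Icc (1 : ℤ) d, |p k - p (-k)| < x := fun k hk => by
    have ⟨h, h'⟩ := pos_and_pos_neg_of_mem_Icc hpos hk
    exact abs_sub_lt_of_add_lt_sqrt hx.le (by positivity)
      (lt_of_sum_eq_card_sub_one_mul_add_sum hsqrt_lt hsum_sqrt hk (by simp; omega))
  rcases mem_Icc_or_neg_mem_Icc hj with hk | hk
  · exact (abs_sub_lt_iff.mp (hbalance j hk)).1
  · simpa using (abs_sub_lt_iff.mp (hbalance (-j) hk)).2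

theorem sum_mul_eq_one_sub_of_abelFunction_eq_zero (hpos : ∀ j ∈ signedRange d, 0 < p j)
    {x : ℝ} (hfx : abelFunction d p x = 0) :
    ∑ i ∈ signedRange d, p i * ((-x + √(x ^ 2 + 4 * p i * p (-i))) / (2 * p i)) = 1 - x := by
  have hterm : ∀ i ∈ signedRange d, p i * ((-x + √(x ^ 2 + 4 * p i * p (-i))) / (2 * p i))
      = (√(x ^ 2 + 4 * p i * p (-i)) - x) / 2 := fun i hi => by
    field_simp [(hpos i hi).ne']; ring
  have hsymm : ∀ k : ℤ, √(x ^ 2 + 4 * p (-k) * p (- -k)) = √(x ^ 2 + 4 * p k * p (-k)) :=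
    fun k => by rw [neg_neg, mul_right_comm]
  rw [sum_congr rfl hterm, sum_signedRange]
  simp only [hsymm, add_halves, sum_sub_distrib, sum_const, Int.card_Icc, nsmul_eq_mul]
  simp only [abelFunction] at hfx
  push_cast [show ((d : ℤ) + 1 - 1).toNat = d by omega]
  linarith

theorem abel_system_of_abelFunction_eq_zero (hd : 2 ≤ d) (hpos : ∀ j ∈ signedRange d, 0 < p j)
    (hsum : ∑ j ∈ signedRange d, p j = 1) {x : ℝ} (hx : 0 < x) (hfx : abelFunction d p x = 0)
    {j : ℤ} (hj : j ∈ signedRange d) :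
    (-x + √(x ^ 2 + 4 * p j * p (-j))) / (2 * p (-j)) ∈ Set.Ioo (0 : ℝ) 1 ∧
      (-x + √(x ^ 2 + 4 * p j * p (-j))) / (2 * p (-j))
        = p j + (-x + √(x ^ 2 + 4 * p j * p (-j))) / (2 * p (-j)) *
          ∑ i ∈ (signedRange d).erase j,
            p i * ((-x + √(x ^ 2 + 4 * p i * p (-i))) / (2 * p i)) := by
  have hpj := hpos j hj
  have hpj' := hpos (-j) (neg_mem_signedRange hj)
  have hlt := sub_lt_of_abelFunction_eq_zero hd hpos hsum hx hfx hj
  refine ⟨neg_add_sqrt_div_mem_Ioo hpj hpj' (by linarith), ?_⟩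
  have hq := neg_add_sqrt_div_mul_add_sqrt_div (x := x) (a := p j) hpj'.ne' (by positivity)
  have htotal := sum_mul_eq_one_sub_of_abelFunction_eq_zero hpos hfx
  rw [← sum_erase_add _ _ hj] at htotal
  have hterm : p j * ((-x + √(x ^ 2 + 4 * p j * p (-j))) / (2 * p j))
      = (√(x ^ 2 + 4 * p j * p (-j)) - x) / 2 := by
    field_simp; ring
  rw [show ∑ i ∈ (signedRange d).erase j, p i * ((-x + √(x ^ 2 + 4 * p i * p (-i))) / (2 * p i))
      = 1 - (x + √(x ^ 2 + 4 * p j * p (-j))) / 2 by linarith]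
  linear_combination hq

end AbelFunction

theorem abel_equation_reduction_general (d : ℕ) (hd : 2 ≤ d)
    (p : ℤ → ℝ)
    (hpos : ∀ j ∈ Finset.Icc (1:ℤ) d ∪ Finset.Icc (-(d:ℤ)) (-1), 0 < p j)
    (hsum : ∑ j ∈ Finset.Icc (1:ℤ) d ∪ Finset.Icc (-(d:ℤ)) (-1), p j = 1)
    (f : ℝ → ℝ)
    (hf : ∀ x : ℝ, f x = (d - 1) * x + 1 -
      ∑ j ∈ Finset.Icc (1:ℤ) d, Real.sqrt (x ^ 2 + 4 * p j * p (-j))) :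
    0 ≤ f 0 ∧ f 1 < 0 ∧ ConcaveOn ℝ Set.univ f
    ∧ (∃! x : ℝ, x ∈ Set.Ioo (0:ℝ) 1 ∧ f x = 0)
    ∧ ∀ x ∈ Set.Ioo (0:ℝ) 1, f x = 0 →
        ∀ j ∈ Finset.Icc (1:ℤ) d ∪ Finset.Icc (-(d:ℤ)) (-1),
          (-x + Real.sqrt (x ^ 2 + 4 * p j * p (-j))) / (2 * p (-j))
            ∈ Set.Ioo (0:ℝ) 1 ∧
          (-x + Real.sqrt (x ^ 2 + 4 * p j * p (-j))) / (2 * p (-j))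
            = p j + ((-x + Real.sqrt (x ^ 2 + 4 * p j * p (-j))) / (2 * p (-j))) *
              ∑ i ∈ (Finset.Icc (1:ℤ) d ∪ Finset.Icc (-(d:ℤ)) (-1)).erase j,
                p i * ((-x + Real.sqrt (x ^ 2 + 4 * p i * p (-i))) / (2 * p i)) := by
  obtain rfl : f = abelFunction d p := funext hf
  have hconc := strictConcaveOn_abelFunction (by omega) hpos
  have h0 := abelFunction_zero_nonneg hpos hsum
  have h1 := abelFunction_one_neg (by omega) hpos
  have hslope : (0 : ℝ) < d - 1 := by
    have : (2 : ℝ) ≤ d := by exact_mod_cast hd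
    linarith
  exact ⟨h0, h1, hconc.concaveOn,
    hconc.existsUnique_zero_mem_Ioo one_pos h0 h1 (hasDerivAt_abelFunction_zero hpos) hslope,
    fun x hx hfx j hj => abel_system_of_abelFunction_eq_zero hd hpos hsum hx.1 hfx hj⟩

/-- For a probability measure on `F_d` supported on the generators and inverses
(`p_j > 0`, `Σ p_j = 1`), the system `q_j = p_j + q_j Σ_{i≠j} p_i q_{−i}`,
`q_j ∈ (0,1)`, reduces to finding `x ∈ (0,1)` with `f(x) = 0`, where
`f(x) = (d−1)x + 1 − Σ_{j=1}^d √(x² + 4 p_j p_{−j})` and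
`q_j = (−x + √(x² + 4 p_j p_{−j}))/(2 p_{−j})`; moreover `f(0) ≥ 0`, `f(1) < 0`,
`f` is concave, and `f` has a unique zero in `(0,1)`. -/
theorem abel_equation_reduction (d : ℕ) (hd : 2 ≤ d)
    (p : ℤ → ℝ)
    (hpos : ∀ j ∈ Finset.Icc (1:ℤ) d ∪ Finset.Icc (-(d:ℤ)) (-1), 0 < p j)
    (hzero : ∀ j ∉ Finset.Icc (1:ℤ) d ∪ Finset.Icc (-(d:ℤ)) (-1), p j = 0)
    (hsum : ∑ j ∈ Finset.Icc (1:ℤ) d ∪ Finset.Icc (-(d:ℤ)) (-1), p j = 1)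
    (f : ℝ → ℝ)
    (hf : ∀ x : ℝ, f x = (d - 1) * x + 1 -
      ∑ j ∈ Finset.Icc (1:ℤ) d, Real.sqrt (x ^ 2 + 4 * p j * p (-j))) :
    0 ≤ f 0 ∧ f 1 < 0 ∧ ConcaveOn ℝ Set.univ f
    ∧ (∃! x : ℝ, x ∈ Set.Ioo (0:ℝ) 1 ∧ f x = 0)
    ∧ ∀ x ∈ Set.Ioo (0:ℝ) 1, f x = 0 →
        ∀ j ∈ Finset.Icc (1:ℤ) d ∪ Finset.Icc (-(d:ℤ)) (-1),
          (-x + Real.sqrt (x ^ 2 + 4 * p j * p (-j))) / (2 * p (-j))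
            ∈ Set.Ioo (0:ℝ) 1 ∧
          (-x + Real.sqrt (x ^ 2 + 4 * p j * p (-j))) / (2 * p (-j))
            = p j + ((-x + Real.sqrt (x ^ 2 + 4 * p j * p (-j))) / (2 * p (-j))) *
              ∑ i ∈ (Finset.Icc (1:ℤ) d ∪ Finset.Icc (-(d:ℤ)) (-1)).erase j,
                p i * ((-x + Real.sqrt (x ^ 2 + 4 * p i * p (-i))) / (2 * p i)) :=
  abel_equation_reduction_general d hd p hpos hsum f hf
end

section
/- Let ν be the Borel probability measure on the boundary ∂F_d of the free group determined by ν(X_γ) = v(γ₁)·Π_{ℓ=2}^m v(γ_ℓ)/(1 − v(γ_{ℓ−1}^{−1})) for reduced words γ = γ₁…γ_m, where v_i = q_i(1−q_{−i})/(1 − q_i q_{−i}) and the q_i satisfy q_j = p_j + q_j Σ_{i≠j} p_i q_{−i}. Then the Radon–Nikodym derivative d(a_i ν)/dν equals q_{−i} on ∂F_d ∖ X_{a_i} and 1/q_i on X_{a_i}, and consequently ν is μ-stationary: μ∗ν = ν. -/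
open MeasureTheory

/-- The boundary `∂F_d` of the free group: infinite reduced words in the
letters `{±1,…,±d}` (letter `-i` standing for `a_i⁻¹`). -/
def FreeBoundary (d : ℕ) : Type :=
  {w : ℕ → ℤ //
    (∀ n, w n ∈ Finset.Icc (1:ℤ) d ∪ Finset.Icc (-(d:ℤ)) (-1)) ∧
    ∀ n, w (n + 1) ≠ -(w n)}

instance (d : ℕ) : MeasurableSpace (FreeBoundary d) :=
  Subtype.instMeasurableSpace

/-- The cylinder `X_γ` of infinite words beginning with `γ`. -/
def cylinder {d : ℕ} (γ : List ℤ) : Set (FreeBoundary d) :=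
  {w | ∀ k : Fin γ.length, w.1 k = γ.get k}

/-!
Left multiplication by the letter `i` maps `X_{iγ}` onto `X_γ` when `γ` does not start with `-i`,
the complement of `X_{-i}` onto `X_i`, and `X_γ` onto `X_{-iγ}` when `γ` does not start with `i`.
Since `v_x / (1 - v_{-x}) = q_x`, the product formula telescopes to
`ν(X_γ) = q_{γ₁} ⋯ q_{γ_{m-1}} v_{γ_m}`, so `ν(X_{xγ}) = q_x ν(X_γ)`; together with
`v_x = q_x (1 - v_{-x})` for one-letter cylinders, this shows that `(a_i)_* ν` and the measure with
density `1/q_i` on `X_i` and `q_{-i}` elsewhere agree on every cylinder. Cylinders form a π-system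
generating the σ-algebra, so the two measures are equal. Stationarity follows because
`Σ_j p_j f_j ≡ 1` for these densities `f_j`: on `X_k` this is
`p_k / q_k + Σ_{j ≠ k} p_j q_{-j} = 1`, the equation defining `q_k`.
-/

open scoped ENNReal

lemma sum_mul_ite_inv_eq_one {s : Finset ℤ} {p q : ℤ → ℝ} {k : ℤ} (hk : k ∈ s)
    (hqk : q k ≠ 0) (h : q k = p k + q k * ∑ j ∈ s.erase k, p j * q (-j)) :
    ∑ j ∈ s, p j * (if k = j then (q j)⁻¹ else q (-j)) = 1 := by
  rw [← Finset.add_sum_erase s _ hk, if_pos rfl,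
    Finset.sum_congr rfl fun j hj => by rw [if_neg (Finset.ne_of_mem_erase hj).symm]]
  field_simp
  linear_combination -h

lemma MeasureTheory.Measure.sum_withDensity_eq_self {α ι : Type*} [MeasurableSpace α]
    [Countable ι] (μ : Measure α) {f : ι → α → ℝ≥0∞} (hf : ∀ i, Measurable (f i))
    (h : ∀ x, ∑' i, f i x = 1) : Measure.sum (fun i => μ.withDensity (f i)) = μ := by
  have hsum : ∑' i, f i = 1 := funext fun x => by rw [ENNReal.tsum_apply, h, Pi.one_apply]
  rw [← withDensity_tsum hf, hsum, withDensity_one]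

namespace FreeBoundary

noncomputable def letters (d : ℕ) : Finset ℤ :=
  Finset.Icc (1:ℤ) d ∪ Finset.Icc (-(d:ℤ)) (-1)

lemma neg_mem_letters {d : ℕ} {j : ℤ} (h : j ∈ letters d) : -j ∈ letters d := by
  simp only [letters, Finset.mem_union, Finset.mem_Icc] at h ⊢
  omega

def IsReducedWord (d : ℕ) (γ : List ℤ) : Prop :=
  (∀ x ∈ γ, x ∈ letters d) ∧ γ.IsChain (fun x y => y ≠ -x)

variable {d : ℕ}

lemma mem_cylinder_iff {γ : List ℤ} {w : FreeBoundary d} :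
    w ∈ cylinder γ ↔ ∀ k (hk : k < γ.length), w.1 k = γ[k] :=
  ⟨fun hw k hk => hw ⟨k, hk⟩, fun hw k => hw k k.2⟩

lemma mem_cylinder_cons_iff {x : ℤ} {l : List ℤ} {w : FreeBoundary d} :
    w ∈ cylinder (x :: l) ↔ w.1 0 = x ∧ ∀ k (hk : k < l.length), w.1 (k + 1) = l[k] := by
  simp only [mem_cylinder_iff, List.length_cons]
  refine ⟨fun h => ⟨h 0 (by omega), fun k hk => h (k + 1) (by omega)⟩, ?_⟩
  rintro ⟨h0, h⟩ (_ | k) hk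
  exacts [h0, h k (by omega)]

lemma cylinder_nil : cylinder (d := d) [] = Set.univ :=
  Set.eq_univ_of_forall fun _ k => k.elim0

lemma cylinder_singleton (x : ℤ) : cylinder (d := d) [x] = {w | w.1 0 = x} := by
  ext w
  simp [mem_cylinder_cons_iff]

lemma measurable_coord (n : ℕ) : Measurable fun w : FreeBoundary d => w.1 n :=
  (measurable_pi_apply n).comp measurable_subtype_coe

lemma measurableSet_cylinder (γ : List ℤ) : MeasurableSet (cylinder (d := d) γ) := by
  have : cylinder (d := d) γ = ⋂ k : Fin γ.length, (fun w => w.1 k) ⁻¹' {γ.get k} := by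
    ext w; simp [_root_.cylinder]
  rw [this]
  exact .iInter fun k => measurable_coord k (measurableSet_singleton _)

lemma isPiSystem_range_cylinder : IsPiSystem (Set.range (_root_.cylinder (d := d))) := by
  rintro _ ⟨γ, rfl⟩ _ ⟨γ', rfl⟩ ⟨w, hw, hw'⟩
  wlog hlen : γ.length ≤ γ'.length generalizing γ γ'
  · rw [Set.inter_comm]; exact this γ' γ hw' hw (by omega)
  refine ⟨γ', (Set.inter_eq_self_of_subset_right fun u hu => ?_).symm⟩
  rw [mem_cylinder_iff] at hw hw' hu ⊢
  intro k hk
  rw [hu k (by omega), ← hw' k (by omega), hw k hk]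

lemma coord_preimage_eq_iUnion (n : ℕ) (m : ℤ) :
    (fun w : FreeBoundary d => w.1 n) ⁻¹' {m} =
      ⋃ (γ : List ℤ) (_ : γ[n]? = some m), cylinder γ := by
  ext w
  simp only [Set.mem_preimage, Set.mem_singleton_iff, Set.mem_iUnion, exists_prop]
  constructor
  · rintro rfl
    refine ⟨List.ofFn fun k : Fin (n + 1) => w.1 k, by rw [List.getElem?_ofFn]; simp, ?_⟩
    rw [mem_cylinder_iff]
    intro k hk
    rw [List.getElem_ofFn]
  · rintro ⟨γ, hγ, hw⟩
    obtain ⟨hn, rfl⟩ := List.getElem?_eq_some_iff.1 hγ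
    exact mem_cylinder_iff.1 hw n hn

lemma measurableSpace_eq_generateFrom_cylinder :
    (inferInstance : MeasurableSpace (FreeBoundary d)) =
      MeasurableSpace.generateFrom (Set.range _root_.cylinder) := by
  set C := Set.range (_root_.cylinder (d := d))
  have hcoord (n : ℕ) (m : ℤ) :
      MeasurableSet[.generateFrom C] ((fun w : FreeBoundary d => w.1 n) ⁻¹' {m}) := by
    rw [coord_preimage_eq_iUnion]
    exact .iUnion fun γ => .iUnion fun _ =>
      MeasurableSpace.measurableSet_generateFrom ⟨γ, rfl⟩
  refine le_antisymm ?_ (MeasurableSpace.generateFrom_le ?_)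
  · exact Measurable.comap_le
      ((@measurable_pi_iff (FreeBoundary d) ℕ (fun _ => ℤ) (.generateFrom C) _ Subtype.val).2
        fun n => @measurable_to_countable' _ _ _ _ (.generateFrom C) _ (hcoord n))
  · rintro _ ⟨γ, rfl⟩
    exact measurableSet_cylinder γ

lemma IsReducedWord.of_nonempty {γ : List ℤ} (h : (cylinder (d := d) γ).Nonempty) :
    IsReducedWord d γ := by
  obtain ⟨w, hw⟩ := h
  rw [mem_cylinder_iff] at hw
  refine ⟨fun x hx => ?_, List.isChain_iff_getElem.2 fun k hk => ?_⟩
  · obtain ⟨k, hk, rfl⟩ := List.getElem_of_mem hx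
    exact hw k hk ▸ w.2.1 k
  · rw [← hw k (by omega), ← hw (k + 1) hk]
    exact w.2.2 k

lemma IsReducedWord.of_cons {x : ℤ} {l : List ℤ} (h : IsReducedWord d (x :: l)) :
    IsReducedWord d l :=
  ⟨fun z hz => h.1 z (List.mem_cons_of_mem x hz), h.2.tail⟩

lemma IsReducedWord.cons {j x : ℤ} {l : List ℤ} (hj : j ∈ letters d) (hx : x ≠ -j)
    (h : IsReducedWord d (x :: l)) : IsReducedWord d (j :: x :: l) :=
  ⟨by simpa [hj] using h.1, List.isChain_cons_cons.2 ⟨hx, h.2⟩⟩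

def IsGeneratorAction (i : ℤ) (g : FreeBoundary d → FreeBoundary d) : Prop :=
  ∀ w n, (g w).1 n = if w.1 0 = -i then w.1 (n + 1) else if n = 0 then i else w.1 (n - 1)

namespace IsGeneratorAction

variable {i : ℤ} {g : FreeBoundary d → FreeBoundary d} (hg : IsGeneratorAction i g)
include hg

lemma apply_mem_cylinder_iff {w : FreeBoundary d} (hw : w.1 0 = -i) {γ : List ℤ} :
    g w ∈ cylinder γ ↔ w ∈ cylinder (-i :: γ) := by
  rw [mem_cylinder_cons_iff, mem_cylinder_iff]
  simp [hg w, hw]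

lemma apply_mem_cylinder_cons_iff {w : FreeBoundary d} (hw : w.1 0 ≠ -i) {γ : List ℤ} :
    g w ∈ cylinder (i :: γ) ↔ w ∈ cylinder γ := by
  rw [mem_cylinder_cons_iff, mem_cylinder_iff]
  simp [hg w, hw]

lemma head_apply_ne {w : FreeBoundary d} (hw : w.1 0 = -i) : (g w).1 0 ≠ i := by
  rw [hg w, if_pos hw, ← neg_neg i, ← hw]
  exact w.2.2 0

lemma preimage_cylinder_singleton : g ⁻¹' cylinder [i] = (cylinder [-i])ᶜ := by
  ext w
  by_cases hw : w.1 0 = -i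
  · simp [cylinder_singleton, hw, hg.head_apply_ne hw]
  · simp only [Set.mem_preimage, hg.apply_mem_cylinder_cons_iff hw, cylinder_nil]
    simp [cylinder_singleton, hw]

lemma preimage_cylinder_cons_cons {y : ℤ} (hy : y ≠ -i) (l : List ℤ) :
    g ⁻¹' cylinder (i :: y :: l) = cylinder (y :: l) := by
  ext w
  by_cases hw : w.1 0 = -i
  · simp only [Set.mem_preimage, mem_cylinder_cons_iff (x := i), hg.head_apply_ne hw,
      false_and, false_iff, mem_cylinder_cons_iff (x := y), hw]
    exact fun h => hy h.1.symm
  · exact hg.apply_mem_cylinder_cons_iff hw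

lemma preimage_cylinder_cons_of_ne {x : ℤ} (hx : x ≠ i) (l : List ℤ) :
    g ⁻¹' cylinder (x :: l) = cylinder (-i :: x :: l) := by
  ext w
  by_cases hw : w.1 0 = -i
  · exact hg.apply_mem_cylinder_iff hw
  · simp [mem_cylinder_cons_iff, hg w, hw, hx.symm]

end IsGeneratorAction

noncomputable def weight (q : ℤ → ℝ) (j : ℤ) : ℝ :=
  q j * (1 - q (-j)) / (1 - q j * q (-j))

/-- `weight q (-j)`, with its denominator written as in the paper's formula. -/
noncomputable def coweight (q : ℤ → ℝ) (j : ℤ) : ℝ :=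
  q (-j) * (1 - q j) / (1 - q j * q (-j))

noncomputable def cylinderFormula (q : ℤ → ℝ) (γ : List ℤ) : ℝ :=
  weight q γ.headI * ∏ ℓ ∈ Finset.Ico 1 γ.length,
    weight q (γ.getD ℓ 0) / (1 - coweight q (γ.getD (ℓ - 1) 0))

noncomputable def cylinderMass (q : ℤ → ℝ) : List ℤ → ℝ
  | [] => 1
  | [x] => weight q x
  | x :: y :: l => q x * cylinderMass q (y :: l)

section Weight

variable {q : ℤ → ℝ} {j : ℤ}

lemma weight_nonneg (hj : q j ∈ Set.Icc 0 1) (hj' : q (-j) ∈ Set.Icc 0 1) :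
    0 ≤ weight q j := by
  obtain ⟨h0, h1⟩ := hj
  obtain ⟨h0', h1'⟩ := hj'
  exact div_nonneg (by nlinarith) (by nlinarith)

lemma weight_eq_mul_one_sub_weight_neg (h : q j * q (-j) ≠ 1) :
    weight q j = q j * (1 - weight q (-j)) := by
  have h' : 1 - q (-j) * q j ≠ 0 := by rw [mul_comm]; exact sub_ne_zero.2 h.symm
  unfold weight
  rw [neg_neg]
  field_simp
  ring

lemma weight_div_one_sub_coweight (h : q j * q (-j) ≠ 1) (h' : q (-j) ≠ 1) :
    weight q j / (1 - coweight q j) = q j := by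
  have hD : 1 - q j * q (-j) ≠ 0 := sub_ne_zero.2 h.symm
  have hN : 1 - q (-j) ≠ 0 := sub_ne_zero.2 h'.symm
  have hco : 1 - coweight q j = (1 - q (-j)) / (1 - q j * q (-j)) := by
    rw [coweight, eq_div_iff hD, sub_mul, div_mul_cancel₀ _ hD]
    ring
  rw [hco, weight, div_div_div_cancel_right₀ hD, mul_div_assoc, div_self hN, mul_one]

lemma cylinderFormula_cons_cons (x y : ℤ) (l : List ℤ) :
    cylinderFormula q (x :: y :: l) =
      weight q x / (1 - coweight q x) * cylinderFormula q (y :: l) := by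
  simp only [cylinderFormula, List.headI, List.length_cons, Finset.prod_Ico_eq_prod_range,
    Nat.add_sub_cancel, Finset.prod_range_succ']
  simp [add_comm 1, div_eq_mul_inv]
  ring

lemma cylinderFormula_eq_cylinderMass :
    ∀ {γ : List ℤ}, γ ≠ [] → (∀ x ∈ γ, q x * q (-x) ≠ 1 ∧ q (-x) ≠ 1) →
      cylinderFormula q γ = cylinderMass q γ
  | [x], _, _ => by simp [cylinderFormula, cylinderMass]
  | x :: y :: l, _, h => by
    rw [cylinderFormula_cons_cons, cylinderMass, weight_div_one_sub_coweight (h x (by simp)).1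
      (h x (by simp)).2, cylinderFormula_eq_cylinderMass (List.cons_ne_nil y l)
      fun z hz => h z (List.mem_cons_of_mem x hz)]

end Weight

noncomputable def generatorDensity (q : ℤ → ℝ) (i : ℤ) (w : FreeBoundary d) : ℝ≥0∞ :=
  if w.1 0 = i then (ENNReal.ofReal (q i))⁻¹ else ENNReal.ofReal (q (-i))

section Density

variable {q : ℤ → ℝ} {i : ℤ}

lemma measurable_generatorDensity : Measurable (generatorDensity (d := d) q i) :=
  Measurable.ite (measurable_coord 0 (measurableSet_singleton i)) measurable_const measurable_const

lemma withDensity_generatorDensity_cylinder_cons (μ : Measure (FreeBoundary d)) (x : ℤ)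
    (l : List ℤ) : μ.withDensity (generatorDensity q i) (cylinder (x :: l)) =
      (if x = i then (ENNReal.ofReal (q i))⁻¹ else ENNReal.ofReal (q (-i))) *
        μ (cylinder (x :: l)) := by
  rw [withDensity_apply _ (measurableSet_cylinder _),
    setLIntegral_congr_fun (measurableSet_cylinder _) fun w hw => ?_, setLIntegral_const]
  simp [generatorDensity, (mem_cylinder_cons_iff.1 hw).1]

section CylinderMeasure

variable {ν : Measure (FreeBoundary d)}
  (hq : ∀ j ∈ letters d, q j ∈ Set.Ioo 0 1)
  (hν : ∀ γ : List ℤ, γ ≠ [] → IsReducedWord d γ →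
    ν (cylinder γ) = .ofReal (cylinderMass q γ))
include hq hν

lemma measure_cylinder_cons_cons {x y : ℤ} {l : List ℤ} (h : IsReducedWord d (x :: y :: l)) :
    ν (cylinder (x :: y :: l)) = .ofReal (q x) * ν (cylinder (y :: l)) := by
  rw [hν _ (List.cons_ne_nil _ _) h, hν _ (List.cons_ne_nil _ _) h.of_cons, cylinderMass,
    ENNReal.ofReal_mul (hq x (h.1 x (by simp))).1.le]

variable [IsProbabilityMeasure ν]

lemma measure_cylinder_singleton_eq_mul_compl {j : ℤ} (hj : j ∈ letters d) :
    ν (cylinder [j]) = .ofReal (q j) * ν (cylinder [-j])ᶜ := by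
  have hj' := neg_mem_letters hj
  have hsingle {k : ℤ} (hk : k ∈ letters d) : ν (cylinder [k]) = .ofReal (weight q k) :=
    hν [k] (List.cons_ne_nil _ _) ⟨by simpa using hk, List.isChain_singleton k⟩
  have hIcc {k : ℤ} (hk : k ∈ letters d) : q k ∈ Set.Icc 0 1 :=
    Set.Ioo_subset_Icc_self (hq k hk)
  have hprod : q j * q (-j) ≠ 1 :=
    (mul_lt_one_of_nonneg_of_lt_one_left (hq j hj).1.le (hq j hj).2 (hq _ hj').2.le).ne
  rw [prob_compl_eq_one_sub (measurableSet_cylinder _), hsingle hj, hsingle hj',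
    weight_eq_mul_one_sub_weight_neg hprod, ENNReal.ofReal_mul (hq j hj).1.le,
    ENNReal.ofReal_sub _ (weight_nonneg (hIcc hj') (by simpa using hIcc hj)), ENNReal.ofReal_one]

lemma lintegral_generatorDensity (hi : i ∈ letters d) :
    ∫⁻ w, generatorDensity q i w ∂ν = 1 := by
  have hqi : ENNReal.ofReal (q i) ≠ 0 := ENNReal.ofReal_ne_zero_iff.2 (hq i hi).1
  have hcompl : ∫⁻ w in (cylinder [i])ᶜ, generatorDensity q i w ∂ν =
      .ofReal (q (-i)) * ν (cylinder [i])ᶜ := by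
    rw [setLIntegral_congr_fun (measurableSet_cylinder _).compl fun w hw => ?_, setLIntegral_const]
    simp_all [generatorDensity, cylinder_singleton]
  have hneg := measure_cylinder_singleton_eq_mul_compl hq hν (neg_mem_letters hi)
  rw [neg_neg] at hneg
  rw [← lintegral_add_compl _ (measurableSet_cylinder [i]), ← withDensity_apply _
    (measurableSet_cylinder _), withDensity_generatorDensity_cylinder_cons, if_pos rfl, hcompl,
    ← hneg, measure_cylinder_singleton_eq_mul_compl hq hν hi, ENNReal.inv_mul_cancel_left hqi
    ENNReal.ofReal_ne_top, add_comm, measure_add_measure_compl (measurableSet_cylinder _),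
    measure_univ]

lemma measure_preimage_cylinder (hi : i ∈ letters d) {g : FreeBoundary d → FreeBoundary d}
    (hg : IsGeneratorAction i g) (γ : List ℤ) :
    ν (g ⁻¹' cylinder γ) = ν.withDensity (generatorDensity q i) (cylinder γ) := by
  have hqi : ENNReal.ofReal (q i) ≠ 0 := ENNReal.ofReal_ne_zero_iff.2 (hq i hi).1
  rcases γ with _ | ⟨x, l⟩
  · rw [cylinder_nil, Set.preimage_univ, measure_univ, withDensity_apply _ .univ,
      Measure.restrict_univ, lintegral_generatorDensity hq hν hi]
  by_cases hred : IsReducedWord d (x :: l)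
  swap
  · rw [Set.not_nonempty_iff_eq_empty.1 (mt IsReducedWord.of_nonempty hred)]
    simp
  rw [withDensity_generatorDensity_cylinder_cons]
  by_cases hx : x = i
  · subst hx
    rw [if_pos rfl]
    rcases l with _ | ⟨y, l⟩
    · rw [hg.preimage_cylinder_singleton, measure_cylinder_singleton_eq_mul_compl hq hν hi,
        ENNReal.inv_mul_cancel_left hqi ENNReal.ofReal_ne_top]
    · rw [hg.preimage_cylinder_cons_cons (List.isChain_cons_cons.1 hred.2).1,
        measure_cylinder_cons_cons hq hν hred, ENNReal.inv_mul_cancel_left hqi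
        ENNReal.ofReal_ne_top]
  · rw [if_neg hx, hg.preimage_cylinder_cons_of_ne hx, measure_cylinder_cons_cons hq hν
      (hred.cons (neg_mem_letters hi) (by rwa [neg_neg]))]

lemma map_eq_withDensity_generatorDensity (hi : i ∈ letters d)
    {g : FreeBoundary d → FreeBoundary d} (hg : IsGeneratorAction i g) (hgm : Measurable g) :
    ν.map g = ν.withDensity (generatorDensity q i) := by
  have hcyl (γ : List ℤ) := (Measure.map_apply hgm (measurableSet_cylinder γ)).trans
    (measure_preimage_cylinder hq hν hi hg γ)
  have : IsProbabilityMeasure (ν.map g) := Measure.isProbabilityMeasure_map hgm.aemeasurable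
  refine ext_of_generate_finite _ measurableSpace_eq_generateFrom_cylinder
    isPiSystem_range_cylinder ?_ (by simpa only [cylinder_nil] using hcyl [])
  rintro _ ⟨γ, rfl⟩
  exact hcyl γ

end CylinderMeasure

end Density

lemma tsum_ofReal_mul_generatorDensity {p q : ℤ → ℝ} (hp : ∀ j ∈ letters d, 0 ≤ p j)
    (hq : ∀ j ∈ letters d, 0 < q j)
    (hfix : ∀ j ∈ letters d, q j = p j + q j * ∑ i ∈ (letters d).erase j, p i * q (-i))
    (w : FreeBoundary d) :
    ∑' j : letters d, ENNReal.ofReal (p j) * generatorDensity q j w = 1 := by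
  have hterm : ∀ j ∈ letters d, ENNReal.ofReal (p j) * generatorDensity q j w =
      .ofReal (p j * if w.1 0 = j then (q j)⁻¹ else q (-j)) := by
    intro j hj
    rw [ENNReal.ofReal_mul (hp j hj), generatorDensity]
    split_ifs
    · rw [ENNReal.ofReal_inv_of_pos (hq j hj)]
    · rfl
  have hk : w.1 0 ∈ letters d := w.2.1 0
  rw [Finset.tsum_subtype (letters d) fun j => ENNReal.ofReal (p j) * generatorDensity q j w,
    Finset.sum_congr rfl hterm, ← ENNReal.ofReal_sum_of_nonneg fun j hj => ?_,
    sum_mul_ite_inv_eq_one hk (hq _ hk).ne' (hfix _ hk), ENNReal.ofReal_one]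
  refine mul_nonneg (hp j hj) ?_
  split_ifs
  exacts [inv_nonneg.2 (hq j hj).le, (hq _ (neg_mem_letters hj)).le]

end FreeBoundary

open FreeBoundary in
theorem harmonic_measure_rnDeriv_and_stationary_general (d : ℕ)
    (p q : ℤ → ℝ)
    (hppos : ∀ j ∈ Finset.Icc (1:ℤ) d ∪ Finset.Icc (-(d:ℤ)) (-1), 0 < p j)
    (hq : ∀ j ∈ Finset.Icc (1:ℤ) d ∪ Finset.Icc (-(d:ℤ)) (-1),
      q j ∈ Set.Ioo (0:ℝ) 1 ∧
      q j = p j + q j *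
        ∑ i ∈ (Finset.Icc (1:ℤ) d ∪ Finset.Icc (-(d:ℤ)) (-1)).erase j,
          p i * q (-i))
    (act : ℤ → FreeBoundary d → FreeBoundary d)
    (hact : ∀ i ∈ Finset.Icc (1:ℤ) d ∪ Finset.Icc (-(d:ℤ)) (-1),
      ∀ w : FreeBoundary d, ∀ n : ℕ,
        (act i w).1 n =
          if w.1 0 = -i then w.1 (n + 1)
          else if n = 0 then i else w.1 (n - 1))
    (hactm : ∀ i, Measurable (act i))
    (ν : Measure (FreeBoundary d)) [IsProbabilityMeasure ν]
    (hcyl : ∀ γ : List ℤ, γ ≠ [] →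
      (∀ x ∈ γ, x ∈ Finset.Icc (1:ℤ) d ∪ Finset.Icc (-(d:ℤ)) (-1)) →
      List.Chain' (fun x y => y ≠ -x) γ →
      ν (cylinder γ) = ENNReal.ofReal
        ((q γ.headI * (1 - q (-γ.headI)) / (1 - q γ.headI * q (-γ.headI))) *
          ∏ ℓ ∈ Finset.Ico 1 γ.length,
            (q (γ.getD ℓ 0) * (1 - q (-(γ.getD ℓ 0))) /
                (1 - q (γ.getD ℓ 0) * q (-(γ.getD ℓ 0)))) /
              (1 - (q (-(γ.getD (ℓ-1) 0)) * (1 - q (γ.getD (ℓ-1) 0)) /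
                (1 - q (γ.getD (ℓ-1) 0) * q (-(γ.getD (ℓ-1) 0))))))) :
    (∀ i ∈ Finset.Icc (1:ℤ) d ∪ Finset.Icc (-(d:ℤ)) (-1),
      (ν.map (act i)).rnDeriv ν =ᵐ[ν]
        fun w : FreeBoundary d =>
          if w.1 0 = i then (ENNReal.ofReal (q i))⁻¹
          else ENNReal.ofReal (q (-i)))
    ∧ Measure.sum
        (fun j : {j : ℤ // j ∈ Finset.Icc (1:ℤ) d ∪ Finset.Icc (-(d:ℤ)) (-1)} =>
          ENNReal.ofReal (p j) • ν.map (act j)) = ν := by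
  have hq_mem (j : ℤ) (hj : j ∈ letters d) : q j ∈ Set.Ioo 0 1 := (hq j hj).1
  have hν (γ : List ℤ) (hγ : γ ≠ []) (hred : IsReducedWord d γ) :
      ν (cylinder γ) = .ofReal (cylinderMass q γ) := by
    refine (hcyl γ hγ hred.1 hred.2).trans (congrArg _ (cylinderFormula_eq_cylinderMass hγ ?_))
    intro x hx
    obtain ⟨hx0, hx1⟩ := hq_mem x (hred.1 x hx)
    have hx' := (hq_mem (-x) (neg_mem_letters (hred.1 x hx))).2
    exact ⟨(mul_lt_one_of_nonneg_of_lt_one_left hx0.le hx1 hx'.le).ne, hx'.ne⟩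
  have hmap (i : ℤ) (hi : i ∈ letters d) :
      ν.map (act i) = ν.withDensity (generatorDensity q i) :=
    map_eq_withDensity_generatorDensity hq_mem hν hi (hact i hi) (hactm i)
  refine ⟨fun i hi => hmap i hi ▸ Measure.rnDeriv_withDensity ν measurable_generatorDensity,
    ?_⟩
  calc Measure.sum (fun j : letters d => ENNReal.ofReal (p j) • ν.map (act j))
      = Measure.sum fun j : letters d =>
          ν.withDensity (ENNReal.ofReal (p j) • generatorDensity q j) := by
        congr 1
        funext j
        rw [hmap j j.2, withDensity_smul _ measurable_generatorDensity]
    _ = ν := Measure.sum_withDensity_eq_self ν (fun j => measurable_generatorDensity.const_smul _)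
        (tsum_ofReal_mul_generatorDensity (fun j hj => (hppos j hj).le) (fun j hj => (hq_mem j hj).1)
          (fun j hj => (hq j hj).2))

/-- If the Borel probability measure `ν` on `∂F_d` has the cylinder values
`ν(X_γ) = v(γ₁)·Π_{ℓ=2}^m v(γ_ℓ)/(1 − v(γ_{ℓ−1}⁻¹))` for reduced `γ`, where
`v_i = q_i(1−q_{−i})/(1−q_i q_{−i})` and the `q_i` solve
`q_j = p_j + q_j Σ_{i≠j} p_i q_{−i}`, then `d(a_i ν)/dν = q_{−i}` off `X_{a_i}`
and `= 1/q_i` on `X_{a_i}`, and `ν` is `μ`-stationary: `μ∗ν = ν`. -/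
theorem harmonic_measure_rnDeriv_and_stationary (d : ℕ) (hd : 2 ≤ d)
    (p q : ℤ → ℝ)
    (hppos : ∀ j ∈ Finset.Icc (1:ℤ) d ∪ Finset.Icc (-(d:ℤ)) (-1), 0 < p j)
    (hpsum : ∑ j ∈ Finset.Icc (1:ℤ) d ∪ Finset.Icc (-(d:ℤ)) (-1), p j = 1)
    (hq : ∀ j ∈ Finset.Icc (1:ℤ) d ∪ Finset.Icc (-(d:ℤ)) (-1),
      q j ∈ Set.Ioo (0:ℝ) 1 ∧
      q j = p j + q j *
        ∑ i ∈ (Finset.Icc (1:ℤ) d ∪ Finset.Icc (-(d:ℤ)) (-1)).erase j,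
          p i * q (-i))
    (act : ℤ → FreeBoundary d → FreeBoundary d)
    (hact : ∀ i ∈ Finset.Icc (1:ℤ) d ∪ Finset.Icc (-(d:ℤ)) (-1),
      ∀ w : FreeBoundary d, ∀ n : ℕ,
        (act i w).1 n =
          if w.1 0 = -i then w.1 (n + 1)
          else if n = 0 then i else w.1 (n - 1))
    (hactm : ∀ i, Measurable (act i))
    (ν : Measure (FreeBoundary d)) [IsProbabilityMeasure ν]
    (hcyl : ∀ γ : List ℤ, γ ≠ [] →
      (∀ x ∈ γ, x ∈ Finset.Icc (1:ℤ) d ∪ Finset.Icc (-(d:ℤ)) (-1)) →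
      List.Chain' (fun x y => y ≠ -x) γ →
      ν (cylinder γ) = ENNReal.ofReal
        ((q γ.headI * (1 - q (-γ.headI)) / (1 - q γ.headI * q (-γ.headI))) *
          ∏ ℓ ∈ Finset.Ico 1 γ.length,
            (q (γ.getD ℓ 0) * (1 - q (-(γ.getD ℓ 0))) /
                (1 - q (γ.getD ℓ 0) * q (-(γ.getD ℓ 0)))) /
              (1 - (q (-(γ.getD (ℓ-1) 0)) * (1 - q (γ.getD (ℓ-1) 0)) /
                (1 - q (γ.getD (ℓ-1) 0) * q (-(γ.getD (ℓ-1) 0))))))) :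
    (∀ i ∈ Finset.Icc (1:ℤ) d ∪ Finset.Icc (-(d:ℤ)) (-1),
      (ν.map (act i)).rnDeriv ν =ᵐ[ν]
        fun w : FreeBoundary d =>
          if w.1 0 = i then (ENNReal.ofReal (q i))⁻¹
          else ENNReal.ofReal (q (-i)))
    ∧ Measure.sum
        (fun j : {j : ℤ // j ∈ Finset.Icc (1:ℤ) d ∪ Finset.Icc (-(d:ℤ)) (-1)} =>
          ENNReal.ofReal (p j) • ν.map (act j)) = ν :=
  harmonic_measure_rnDeriv_and_stationary_general d p q hppos hq act hact hactm ν hcyl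
end

section
/- For real numbers 0 < q_1, …, q_d < 1, the d×d matrix M with M_{jj} = 1/q_j + q_j and M_{jk} = 2q_k for j ≠ k is nonsingular; in fact its determinant is positive. -/
/-!
Writing the matrix as `D + 𝟙 (2q)ᵀ` with `D = diag (1/q_j - q_j)`, which is positive for
`0 < q_j < 1`, the matrix determinant lemma gives
`det = ∏ (1/q_j - q_j) * (1 + ∑ 2 q_j / (1/q_j - q_j)) > 0`.
-/

open Matrix

theorem Matrix.det_diagonal_add_replicateCol_mul_replicateRow {n K ι : Type*} [Fintype n]
    [DecidableEq n] [Field K] [Unique ι] {f : n → K} (hf : ∀ i, f i ≠ 0) (u v : n → K) :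
    det (diagonal f + replicateCol ι u * replicateRow ι v) =
      (∏ i, f i) * (1 + ∑ i, v i * u i / f i) := by
  have hdet : IsUnit (diagonal f).det := by
    rw [det_diagonal]; exact (Finset.prod_ne_zero_iff.2 fun i _ => hf i).isUnit
  have hinv : (diagonal f)⁻¹ = diagonal f⁻¹ := inv_eq_right_inv <| by
    rw [diagonal_mul_diagonal, ← diagonal_one]
    exact congrArg diagonal (funext fun i => mul_inv_cancel₀ (hf i))
  rw [det_add_replicateCol_mul_replicateRow hdet, det_diagonal, hinv, det_unique]
  simp [mul_apply, diagonal_apply, div_eq_mul_inv, mul_right_comm]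

theorem Matrix.det_diagonal_add_replicateCol_mul_replicateRow_pos {n K ι : Type*} [Fintype n]
    [DecidableEq n] [Field K] [LinearOrder K] [IsStrictOrderedRing K] [Unique ι] {f u v : n → K}
    (hf : ∀ i, 0 < f i) (huv : ∀ i, 0 ≤ v i * u i) :
    0 < det (diagonal f + replicateCol ι u * replicateRow ι v) := by
  rw [det_diagonal_add_replicateCol_mul_replicateRow fun i => (hf i).ne']
  have := Finset.sum_nonneg fun i (_ : i ∈ Finset.univ) => div_nonneg (huv i) (hf i).le
  exact mul_pos (Finset.prod_pos fun i _ => hf i) (by linarith)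

theorem harmonic_matrix_eq_diagonal_add_replicateCol_mul_replicateRow {n K : Type*}
    [DecidableEq n] [Field K] (q : n → K) :
    (of fun j k : n => if j = k then 1 / q j + q j else 2 * q k) =
      diagonal (fun j => 1 / q j - q j) +
        replicateCol (Fin 1) (fun _ => (1 : K)) * replicateRow (Fin 1) (fun k => 2 * q k) := by
  ext j k
  by_cases h : j = k
  · subst h; simp [mul_apply]; ring
  · simp [h, mul_apply]

/-- For `0 < q_1, …, q_d < 1`, the `d×d` matrix with diagonal entries
`1/q_j + q_j` and off-diagonal entries `M_{jk} = 2q_k` has positive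
determinant; in particular it is nonsingular. -/
theorem harmonic_matrix_det_pos (d : ℕ) (q : Fin d → ℝ)
    (hq0 : ∀ j, 0 < q j) (hq1 : ∀ j, q j < 1) :
    0 < Matrix.det (Matrix.of fun j k : Fin d =>
        if j = k then 1 / q j + q j else 2 * q k)
    ∧ IsUnit (Matrix.of fun j k : Fin d =>
        if j = k then 1 / q j + q j else 2 * q k) := by
  have hdiag : ∀ j, 0 < 1 / q j - q j := fun j => by
    have := hq0 j
    rw [sub_pos, lt_div_iff₀ this]
    nlinarith [hq1 j]
  have hdet : 0 < det (of fun j k : Fin d => if j = k then 1 / q j + q j else 2 * q k) := by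
    rw [harmonic_matrix_eq_diagonal_add_replicateCol_mul_replicateRow]
    exact det_diagonal_add_replicateCol_mul_replicateRow_pos hdiag fun k => by
      simpa using (hq0 k).le
  exact ⟨hdet, (isUnit_iff_isUnit_det _).2 hdet.ne'.isUnit⟩
end
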